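/- arXiv:1803.07300 — 11 statements merged into one kernel-verified Lean document; each statement's English description precedes it below -/
import Mathlib

section
/- For any real number z, if ℓ(z) := ln(1 + exp(z)) satisfies ℓ(z) ≤ ε for some 0 < ε ≤ 1, then ℓ'(z)/ℓ(z) ≥ 1 − ε, where ℓ'(z) = exp(z)/(1+exp(z)). -/
/-!
Writing `L = ln(1 + e^z)`, the logistic derivative is `1 - e^{-L}`, so the ratio is
`(1 - e^{-L}) / L`. Multiplying `L + 1 ≤ e^L` by `e^{-L}` shows this is at least `e^{-L}`,
and `e^{-L} ≥ 1 - L ≥ 1 - ε`.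
-/

open Real

theorem Real.exp_neg_le_one_sub_exp_neg_div {x : ℝ} (hx : 0 < x) :
    exp (-x) ≤ (1 - exp (-x)) / x := by
  rw [le_div_iff₀ hx]
  have h : exp (-x) * (x + 1) ≤ 1 := by
    calc exp (-x) * (x + 1) ≤ exp (-x) * exp x := by
          gcongr; exact add_one_le_exp x
      _ = 1 := by rw [← exp_add, neg_add_cancel, exp_zero]
  linarith

theorem Real.exp_div_one_add_exp (z : ℝ) :
    exp z / (1 + exp z) = 1 - exp (-log (1 + exp z)) := by
  have hpos : 0 < 1 + exp z := by positivity
  rw [exp_neg, exp_log hpos]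
  field_simp
  ring

theorem Real.log_one_add_exp_pos (z : ℝ) : 0 < log (1 + exp z) :=
  log_pos (by linarith [exp_pos z])

theorem logistic_deriv_ratio_general (z ε : ℝ)
    (h : Real.log (1 + Real.exp z) ≤ ε) :
    (Real.exp z / (1 + Real.exp z)) / Real.log (1 + Real.exp z) ≥ 1 - ε := by
  rw [exp_div_one_add_exp]
  set L := log (1 + exp z)
  calc 1 - ε ≤ 1 - L := by linarith
    _ ≤ exp (-L) := by linarith [add_one_le_exp (-L)]
    _ ≤ (1 - exp (-L)) / L := exp_neg_le_one_sub_exp_neg_div (log_one_add_exp_pos z)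

/-- If the logistic loss `ℓ(z) = ln(1 + exp z)` satisfies `ℓ(z) ≤ ε` for some `0 < ε ≤ 1`,
then `ℓ'(z)/ℓ(z) ≥ 1 - ε`, where `ℓ'(z) = exp z / (1 + exp z)`. -/
theorem logistic_deriv_ratio (z ε : ℝ) (hε0 : 0 < ε) (hε1 : ε ≤ 1)
    (h : Real.log (1 + Real.exp z) ≤ ε) :
    (Real.exp z / (1 + Real.exp z)) / Real.log (1 + Real.exp z) ≥ 1 - ε :=
  logistic_deriv_ratio_general z ε h
end

section
/- Let A ∈ ℝ^{n×d} with rows of norm at most 1, ℓ convex with ℓ' ≤ ℓ and ℓ'' ≤ ℓ, and R(w) = (1/n)Σ_i ℓ(⟨A_i,w⟩). For w ∈ ℝ^d, η > 0, set ĥ := ηR(w) and suppose ĥ ≤ 1, and let w' = w − η∇R(w). Then R(w') ≤ R(w) and R(w') ≤ R(w)(1 − ĥ(1 − ĥ/2)|∇R(w)|²/R(w)²). -/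
/-!
Restrict the risk to the step segment, `g t = R (w - t • η • ∇R(w))` for `t ∈ [0, 1]`. Then
`g' 0 = -η‖∇R(w)‖²`, and since `‖A i‖ ≤ 1` and `0 ≤ ℓ'' ≤ ℓ` the curvature is self-bounded:
`g'' ≤ η²‖∇R(w)‖² g`. While `g` stays below `g 0`, the second-order Taylor bound keeps `g' < 0`
before time `1` (this is where `ηR(w) ≤ 1` enters), so by convexity and continuous induction
`g ≤ g 0` on all of `[0, 1]`. Taylor once more gives
`R(w') ≤ R(w) - η‖∇R(w)‖² + η²‖∇R(w)‖² R(w) / 2`, which is the multiplicative bound.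
-/

open Set
open scoped RealInnerProductSpace

section Taylor

variable {f f' f'' : ℝ → ℝ} {a b x : ℝ}

theorem image_le_linear_of_hasDerivAt_le {C : ℝ} (hf : ∀ y ∈ Icc a b, HasDerivAt f (f' y) y)
    (hC : ∀ y ∈ Ico a b, f' y ≤ C) (hx : x ∈ Icc a b) : f x ≤ f a + C * (x - a) := by
  refine image_le_of_deriv_right_le_deriv_boundary
    (fun y hy ↦ (hf y hy).continuousAt.continuousWithinAt)
    (fun y hy ↦ (hf y (Ico_subset_Icc_self hy)).hasDerivWithinAt)
    (B := fun y ↦ f a + C * (y - a)) (by simp) (by fun_prop) (fun y _ ↦ ?_) hC hx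
  simpa using (((hasDerivAt_id y).sub_const a).const_mul C).const_add (f a) |>.hasDerivWithinAt

theorem image_le_quadratic_of_hasDerivAt_le {M : ℝ} (hf : ∀ y ∈ Icc a b, HasDerivAt f (f' y) y)
    (hf' : ∀ y ∈ Icc a b, HasDerivAt f' (f'' y) y) (hM : ∀ y ∈ Ico a b, f'' y ≤ M)
    (hx : x ∈ Icc a b) : f x ≤ f a + f' a * (x - a) + M * (x - a) ^ 2 / 2 := by
  refine image_le_of_deriv_right_le_deriv_boundary
    (fun y hy ↦ (hf y hy).continuousAt.continuousWithinAt)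
    (fun y hy ↦ (hf y (Ico_subset_Icc_self hy)).hasDerivWithinAt)
    (B := fun y ↦ f a + f' a * (y - a) + M * (y - a) ^ 2 / 2) (by simp) (by fun_prop)
    (fun y _ ↦ ?_) (fun y hy ↦ image_le_linear_of_hasDerivAt_le hf' hM (Ico_subset_Icc_self hy)) hx
  refine (((((hasDerivAt_id' y).sub_const a).const_mul (f' a)).const_add (f a)).fun_add
    ((((hasDerivAt_id' y).sub_const a).fun_pow 2).const_mul M |>.div_const 2)).hasDerivWithinAt
    |>.congr_deriv ?_
  norm_num
  ring

end Taylor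

section Descent

variable {g g' g'' : ℝ → ℝ} {K : ℝ}

theorem deriv_le_of_le_apply_zero
    (hg' : ∀ t, HasDerivAt g' (g'' t) t) (hconv : ConvexOn ℝ univ g) (hK : 0 ≤ K)
    (hg''_le : ∀ t, g'' t ≤ K * g t) {x : ℝ} (hx : 0 ≤ x) (hgx : g x ≤ g 0) :
    g' x ≤ g' 0 + K * g 0 * x := by
  have hbound : ∀ y ∈ Ico 0 x, g'' y ≤ K * g 0 := fun y hy ↦ by
    have hseg : y ∈ segment ℝ 0 x := by rw [segment_eq_Icc hx]; exact Ico_subset_Icc_self hy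
    have := hconv.le_on_segment (mem_univ 0) (mem_univ x) hseg
    exact (hg''_le y).trans (mul_le_mul_of_nonneg_left (by simpa [hgx] using this) hK)
  simpa using image_le_linear_of_hasDerivAt_le (fun y _ ↦ hg' y) hbound ⟨hx, le_rfl⟩

theorem le_apply_zero_of_deriv2_le_mul (hg : ∀ t, HasDerivAt g (g' t) t)
    (hg' : ∀ t, HasDerivAt g' (g'' t) t) (hg''_nonneg : ∀ t, 0 ≤ g'' t) (hK : 0 ≤ K)
    (hg''_le : ∀ t, g'' t ≤ K * g t) (hslope : g' 0 < 0) (hstep : K * g 0 ≤ -g' 0) :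
    ∀ t ∈ Icc (0 : ℝ) 1, g t ≤ g 0 := by
  have hcont : Continuous g := continuous_iff_continuousAt.2 fun t ↦ (hg t).continuousAt
  have hconv : ConvexOn ℝ univ g :=
    convexOn_of_hasDerivWithinAt2_nonneg convex_univ hcont.continuousOn
      (fun t _ ↦ (hg t).hasDerivWithinAt) (fun t _ ↦ (hg' t).hasDerivWithinAt)
      (fun t _ ↦ hg''_nonneg t)
  -- Continuous induction on the sublevel set `{t | g t ≤ g 0}`: by convexity it contains `[0, x]`
  -- along with `x`, so the curvature bound keeps `g' x < 0`.
  refine IsClosed.Icc_subset_of_forall_mem_nhdsWithin (s := {t | g t ≤ g 0})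
    ((isClosed_le hcont continuous_const).inter isClosed_Icc) (le_refl (g 0)) ?_
  rintro x ⟨hgx : g x ≤ g 0, hx0, hx1⟩
  have hneg : g' x < 0 := by
    have := deriv_le_of_le_apply_zero hg' hconv hK hg''_le hx0 hgx
    nlinarith [mul_le_mul_of_nonneg_right hstep hx0]
  filter_upwards [((hg x).hasDerivWithinAt (s := Ioi x)).limsup_slope_le' (lt_irrefl x) hneg,
    self_mem_nhdsWithin] with y hslope hxy
  rw [slope_def_field, div_lt_iff₀ (sub_pos.2 hxy), zero_mul, sub_neg] at hslope
  exact hslope.le.trans hgx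

theorem apply_one_le_of_deriv2_le_mul (hg : ∀ t, HasDerivAt g (g' t) t)
    (hg' : ∀ t, HasDerivAt g' (g'' t) t) (hg''_nonneg : ∀ t, 0 ≤ g'' t) (hK : 0 ≤ K)
    (hg''_le : ∀ t, g'' t ≤ K * g t) (hslope : g' 0 < 0) (hstep : K * g 0 ≤ -g' 0) :
    g 1 ≤ g 0 ∧ g 1 ≤ g 0 + g' 0 + K * g 0 / 2 := by
  have hsub := le_apply_zero_of_deriv2_le_mul hg hg' hg''_nonneg hK hg''_le hslope hstep
  have hbound : ∀ t ∈ Ico (0 : ℝ) 1, g'' t ≤ K * g 0 := fun t ht ↦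
    (hg''_le t).trans (mul_le_mul_of_nonneg_left (hsub t (Ico_subset_Icc_self ht)) hK)
  refine ⟨hsub 1 (right_mem_Icc.2 zero_le_one), ?_⟩
  simpa using image_le_quadratic_of_hasDerivAt_le (fun t _ ↦ hg t) (fun t _ ↦ hg' t) hbound
    (right_mem_Icc.2 zero_le_one)

end Descent

section WeightedRisk

variable {E ι : Type*} [NormedAddCommGroup E] [InnerProductSpace ℝ E] [Fintype ι]

def weightedRisk (c : ι → ℝ) (ℓ : ℝ → ℝ) (A : ι → E) (x : E) : ℝ :=
  ∑ i, c i * ℓ ⟪A i, x⟫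

variable {c : ι → ℝ} {ℓ : ℝ → ℝ} {A : ι → E}

theorem weightedRisk_nonneg (hc : ∀ i, 0 ≤ c i) (hℓ : ∀ z, 0 ≤ ℓ z) (x : E) :
    0 ≤ weightedRisk c ℓ A x :=
  Finset.sum_nonneg fun i _ ↦ mul_nonneg (hc i) (hℓ _)

theorem hasDerivAt_weightedRisk_line (hℓ : Differentiable ℝ ℓ) (w u : E) (t : ℝ) :
    HasDerivAt (fun s ↦ weightedRisk c ℓ A (w + s • u))
      (weightedRisk (fun i ↦ c i * ⟪A i, u⟫) (deriv ℓ) A (w + t • u)) t := by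
  refine HasDerivAt.fun_sum fun i _ ↦ ?_
  have hline : HasDerivAt (fun s : ℝ ↦ ⟪A i, w + s • u⟫) ⟪A i, u⟫ t := by
    simp only [inner_add_right, inner_smul_right]
    simpa using ((hasDerivAt_id t).mul_const ⟪A i, u⟫).const_add ⟪A i, w⟫
  simpa [mul_assoc, mul_comm] using ((hℓ _).hasDerivAt.comp t hline).const_mul (c i)

theorem differentiable_weightedRisk (hℓ : Differentiable ℝ ℓ) :
    Differentiable ℝ (weightedRisk c ℓ A) := fun w ↦
  .fun_sum fun i _ ↦ ((hℓ _).comp w (innerSL ℝ (A i)).differentiableAt).const_mul (c i)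

theorem fderiv_weightedRisk_apply (hℓ : Differentiable ℝ ℓ) (w u : E) :
    fderiv ℝ (weightedRisk c ℓ A) w u = weightedRisk (fun i ↦ c i * ⟪A i, u⟫) (deriv ℓ) A w := by
  have hline : HasLineDerivAt ℝ (weightedRisk c ℓ A) (fderiv ℝ (weightedRisk c ℓ A) w u) w u :=
    (differentiable_weightedRisk hℓ w).hasFDerivAt.hasLineDerivAt u
  simpa using hline.unique (hasDerivAt_weightedRisk_line hℓ w u 0)

theorem weightedRisk_mul_inner_mul_inner_le {φ ψ : ℝ → ℝ} (hφ : ∀ z, 0 ≤ φ z)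
    (hφψ : ∀ z, φ z ≤ ψ z) (hc : ∀ i, 0 ≤ c i) (hA : ∀ i, ‖A i‖ ≤ 1) (u x : E) :
    weightedRisk (fun i ↦ c i * ⟪A i, u⟫ * ⟪A i, u⟫) φ A x ≤ ‖u‖ ^ 2 * weightedRisk c ψ A x := by
  rw [weightedRisk, weightedRisk, Finset.mul_sum]
  refine Finset.sum_le_sum fun i _ ↦ ?_
  have hinner : ⟪A i, u⟫ * ⟪A i, u⟫ ≤ ‖u‖ ^ 2 := by
    have := abs_real_inner_le_norm (A i) u
    have := mul_le_mul_of_nonneg_right (hA i) (norm_nonneg u)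
    nlinarith [abs_mul_abs_self ⟪A i, u⟫, abs_nonneg ⟪A i, u⟫]
  calc c i * ⟪A i, u⟫ * ⟪A i, u⟫ * φ ⟪A i, x⟫ = c i * (⟪A i, u⟫ * ⟪A i, u⟫) * φ ⟪A i, x⟫ := by
        ring
    _ ≤ c i * ‖u‖ ^ 2 * ψ ⟪A i, x⟫ :=
      mul_le_mul (mul_le_mul_of_nonneg_left hinner (hc i)) (hφψ _) (hφ _)
        (mul_nonneg (hc i) (sq_nonneg _))
    _ = ‖u‖ ^ 2 * (c i * ψ ⟪A i, x⟫) := by ring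

theorem weightedRisk_add_le (hc : ∀ i, 0 ≤ c i) (hA : ∀ i, ‖A i‖ ≤ 1)
    (hℓ : ContDiff ℝ 2 ℓ) (hconv : ConvexOn ℝ univ ℓ) (hℓ'' : ∀ z, deriv (deriv ℓ) z ≤ ℓ z)
    {w u : E} (hslope : fderiv ℝ (weightedRisk c ℓ A) w u < 0)
    (hstep : ‖u‖ ^ 2 * weightedRisk c ℓ A w ≤ -fderiv ℝ (weightedRisk c ℓ A) w u) :
    weightedRisk c ℓ A (w + u) ≤ weightedRisk c ℓ A w ∧
      weightedRisk c ℓ A (w + u) ≤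
        weightedRisk c ℓ A w + fderiv ℝ (weightedRisk c ℓ A) w u +
          ‖u‖ ^ 2 * weightedRisk c ℓ A w / 2 := by
  have hℓ₁ : Differentiable ℝ ℓ := hℓ.differentiable two_ne_zero
  have hℓ₂ : Differentiable ℝ (deriv ℓ) :=
    (contDiff_succ_iff_deriv (n := 1).1 hℓ).2.2.differentiable one_ne_zero
  have hℓ''_nonneg : ∀ z, 0 ≤ deriv (deriv ℓ) z := fun z ↦
    (monotoneOn_univ.1 (hconv.monotoneOn_deriv fun x _ ↦ hℓ₁ x)).deriv_nonneg
  rw [fderiv_weightedRisk_apply hℓ₁] at hslope hstep ⊢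
  simpa using apply_one_le_of_deriv2_le_mul (g := fun t ↦ weightedRisk c ℓ A (w + t • u))
    (hasDerivAt_weightedRisk_line hℓ₁ w u) (hasDerivAt_weightedRisk_line hℓ₂ w u)
    (fun t ↦ weightedRisk_nonneg
      (fun i ↦ by rw [mul_assoc]; exact mul_nonneg (hc i) (mul_self_nonneg _)) hℓ''_nonneg _)
    (sq_nonneg ‖u‖) (fun t ↦ weightedRisk_mul_inner_mul_inner_le hℓ''_nonneg hℓ'' hc hA u _)
    (by simpa using hslope) (by simpa using hstep)

end WeightedRisk

theorem risk_step_multiplicative_general {n d : ℕ}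
    (A : Fin n → EuclideanSpace ℝ (Fin d)) (hA : ∀ i, ‖A i‖ ≤ 1)
    (ℓ : ℝ → ℝ) (hconv : ConvexOn ℝ Set.univ ℓ) (hC2 : ContDiff ℝ 2 ℓ)
    (hℓ'' : ∀ z, deriv (deriv ℓ) z ≤ ℓ z)
    (R : EuclideanSpace ℝ (Fin d) → ℝ)
    (hR : ∀ w, R w = (1 / (n : ℝ)) * ∑ i, ℓ ⟪A i, w⟫)
    (w : EuclideanSpace ℝ (Fin d)) (η : ℝ) (hη : 0 < η)
    (hstep : η * R w ≤ 1)
    (w' : EuclideanSpace ℝ (Fin d)) (hw' : w' = w - η • gradient R w) :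
    R w' ≤ R w ∧
    R w' ≤ R w * (1 - (η * R w) * (1 - (η * R w) / 2) * (‖gradient R w‖ ^ 2 / R w ^ 2)) := by
  have hR_eq : weightedRisk (fun _ ↦ 1 / (n : ℝ)) ℓ A = R :=
    funext fun x ↦ by rw [hR, weightedRisk, Finset.mul_sum]
  set v := gradient R w
  by_cases hv : v = 0
  · simp [hw', hv]
  have hslope : fderiv ℝ R w (-(η • v)) = -(η * ‖v‖ ^ 2) := by
    rw [← inner_gradient_left, inner_neg_right, real_inner_smul_right, real_inner_self_eq_norm_sq]
  have hnorm : ‖-(η • v)‖ ^ 2 = η ^ 2 * ‖v‖ ^ 2 := by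
    rw [norm_neg, norm_smul, Real.norm_of_nonneg hη.le, mul_pow]
  have hstep' : η ^ 2 * ‖v‖ ^ 2 * R w ≤ η * ‖v‖ ^ 2 :=
    calc η ^ 2 * ‖v‖ ^ 2 * R w = η * ‖v‖ ^ 2 * (η * R w) := by ring
      _ ≤ η * ‖v‖ ^ 2 := mul_le_of_le_one_right (by positivity) hstep
  obtain ⟨hdecrease, hbound⟩ := weightedRisk_add_le (c := fun _ ↦ 1 / (n : ℝ)) (u := -(η • v))
    (fun _ ↦ by positivity) hA hC2 hconv hℓ''
    (by rw [hR_eq, hslope]; have := norm_pos_iff.2 hv; exact neg_neg_of_pos (by positivity))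
    (by rwa [hR_eq, hslope, neg_neg, hnorm])
  rw [hR_eq, ← sub_eq_add_neg, ← hw'] at hdecrease hbound
  rw [hslope, hnorm] at hbound
  refine ⟨hdecrease, ?_⟩
  rcases eq_or_ne (R w) 0 with h0 | h0
  · rw [h0, zero_mul]
    exact h0 ▸ hdecrease
  · convert hbound using 1
    field_simp
    ring

/-- One step of gradient descent with normalized step size `ηR(w) ≤ 1` decreases the empirical
risk, multiplicatively: `R(w') ≤ R(w)(1 − ĥ(1 − ĥ/2)|∇R(w)|²/R(w)²)` with `ĥ = ηR(w)`. -/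
theorem risk_step_multiplicative {n d : ℕ} (hn : 0 < n)
    (A : Fin n → EuclideanSpace ℝ (Fin d)) (hA : ∀ i, ‖A i‖ ≤ 1)
    (ℓ : ℝ → ℝ) (hconv : ConvexOn ℝ Set.univ ℓ) (hC2 : ContDiff ℝ 2 ℓ)
    (hℓ' : ∀ z, deriv ℓ z ≤ ℓ z) (hℓ'' : ∀ z, deriv (deriv ℓ) z ≤ ℓ z)
    (R : EuclideanSpace ℝ (Fin d) → ℝ)
    (hR : ∀ w, R w = (1 / (n : ℝ)) * ∑ i, ℓ ⟪A i, w⟫)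
    (w : EuclideanSpace ℝ (Fin d)) (η : ℝ) (hη : 0 < η)
    (hstep : η * R w ≤ 1)
    (w' : EuclideanSpace ℝ (Fin d)) (hw' : w' = w - η • gradient R w) :
    R w' ≤ R w ∧
    R w' ≤ R w * (1 - (η * R w) * (1 - (η * R w) / 2) * (‖gradient R w‖ ^ 2 / R w ^ 2)) :=
  risk_step_multiplicative_general A hA ℓ hconv hC2 hℓ'' R hR w η hη hstep w' hw'
end

section
/- Under the hypotheses of the previous smoothness lemma, gradient descent iterates w_0, w_1, …, w_t with w_{j+1} = w_j − η_j ∇R(w_j), ĥ_j := η_j R(w_j) ≤ 1, and γ_j := |∇R(w_j)|/R(w_j) satisfy R(w_t) ≤ R(w_0) exp(−Σ_{j<t} ĥ_j (1 − ĥ_j/2) γ_j²), and moreover |w_t − w_0| ≤ Σ_{j<t} ĥ_j γ_j. -/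
/-!
Along one step, `f s = R (w_j + s • δ)` with `δ = -η_j ∇R(w_j)` is convex and, since `ℓ'' ≤ ℓ`
and `‖A i‖ ≤ 1`, satisfies `f'' ≤ ‖δ‖² f`. When `η_j R(w_j) ≤ 1` a continuity argument keeps `f`
below `f 0` on `[0, 1]`, so `f'' ≤ ‖δ‖² f 0` there, and the second-order Taylor bound gives
`R(w_{j+1}) ≤ R(w_j) - η_j (1 - η_j R(w_j)/2) ‖∇R(w_j)‖²`. Writing this as `R(w_j) (1 - y)` and
using `1 - y ≤ exp (-y)` yields one factor of the product; the distance bound is the triangle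
inequality.
-/

open scoped RealInnerProductSpace

open Set Filter

section Comparison

variable {f f' f'' : ℝ → ℝ} {K : ℝ}

theorem image_le_of_hasDerivAt_le_boundary {g g' B B' : ℝ → ℝ} {a b : ℝ}
    (hg : ∀ x, HasDerivAt g (g' x) x) (hB : ∀ x, HasDerivAt B (B' x) x) (ha : g a ≤ B a)
    (hle : ∀ x ∈ Ico a b, g' x ≤ B' x) : ∀ x ∈ Icc a b, g x ≤ B x := fun _ hx =>
  image_le_of_deriv_right_le_deriv_boundary
    (fun x _ => (hg x).continuousAt.continuousWithinAt) (fun x _ => (hg x).hasDerivWithinAt) ha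
    (fun x _ => (hB x).continuousAt.continuousWithinAt) (fun x _ => (hB x).hasDerivWithinAt)
    hle hx

theorem deriv_le_of_deriv2_le_mul_of_le (hf' : ∀ s, HasDerivAt f' (f'' s) s) (hK : 0 ≤ K)
    {m : ℝ} (hbound : ∀ s ∈ Icc 0 m, f'' s ≤ K * f s) (hle : ∀ s ∈ Icc 0 m, f s ≤ f 0) :
    ∀ u ∈ Icc 0 m, f' u ≤ f' 0 + K * f 0 * u := by
  refine image_le_of_hasDerivAt_le_boundary hf'
    (fun u => ((hasDerivAt_id u).const_mul (K * f 0)).const_add (f' 0)) (by simp) ?_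
  intro s hs
  have hs' := Ico_subset_Icc_self hs
  simpa using (hbound s hs').trans (mul_le_mul_of_nonneg_left (hle s hs') hK)

theorem apply_le_apply_zero_of_deriv2_le_mul (hf : ∀ s, HasDerivAt f (f' s) s)
    (hf' : ∀ s, HasDerivAt f' (f'' s) s) (hf''₀ : ∀ s, 0 ≤ f'' s) (hK : 0 ≤ K)
    (hbound : ∀ s ∈ Icc 0 1, f'' s ≤ K * f s) (hneg : f' 0 < 0) (hsmall : K * f 0 ≤ -f' 0) :
    ∀ s ∈ Icc 0 1, f s ≤ f 0 := by
  have hconv : ConvexOn ℝ univ f := convexOn_of_hasDerivWithinAt2_nonneg convex_univ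
    (fun s _ => (hf s).continuousAt.continuousWithinAt) (fun s _ => (hf s).hasDerivWithinAt)
    (fun s _ => (hf' s).hasDerivWithinAt) (fun s _ => hf''₀ s)
  have hcont : Continuous f := continuous_iff_continuousAt.2 fun s => (hf s).continuousAt
  refine IsClosed.Icc_subset_of_forall_mem_nhdsWithin
    ((isClosed_le hcont continuous_const).inter isClosed_Icc) (le_refl (f 0)) ?_
  rintro x ⟨hx, hx₀, hx₁⟩
  change f x ≤ f 0 at hx
  -- By convexity the sublevel set `{f ≤ f 0}` contains `[0, x]` as soon as it contains `x`.
  have hbelow : ∀ u ∈ Icc 0 x, f u ≤ f 0 := fun u hu =>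
    (hconv.le_max_of_mem_Icc trivial trivial hu).trans (max_le le_rfl hx)
  have hderiv : f' x < 0 := by
    have := deriv_le_of_deriv2_le_mul_of_le hf' hK
      (fun s hs => hbound s ⟨hs.1, hs.2.trans hx₁.le⟩) hbelow x ⟨hx₀, le_rfl⟩
    nlinarith [mul_le_mul_of_nonneg_right hsmall hx₀]
  filter_upwards [(hf x).hasDerivWithinAt.limsup_slope_le' (lt_irrefl x) hderiv,
    self_mem_nhdsWithin] with y hy hxy
  rw [slope_def_field, div_lt_iff₀ (sub_pos.2 hxy)] at hy
  show f y ≤ f 0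
  linarith

theorem le_add_deriv_add_of_deriv2_le_mul (hf : ∀ s, HasDerivAt f (f' s) s)
    (hf' : ∀ s, HasDerivAt f' (f'' s) s) (hf''₀ : ∀ s, 0 ≤ f'' s) (hK : 0 ≤ K)
    (hbound : ∀ s ∈ Icc 0 1, f'' s ≤ K * f s) (hneg : f' 0 < 0) (hsmall : K * f 0 ≤ -f' 0) :
    f 1 ≤ f 0 + f' 0 + K * f 0 / 2 := by
  have hf'le := deriv_le_of_deriv2_le_mul_of_le hf' hK hbound
    (apply_le_apply_zero_of_deriv2_le_mul hf hf' hf''₀ hK hbound hneg hsmall)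
  have hB : ∀ u, HasDerivAt (fun u => f 0 + f' 0 * u + K * f 0 * u ^ 2 / 2)
      (f' 0 + K * f 0 * u) u := fun u => by
    refine ((((hasDerivAt_id u).const_mul (f' 0)).const_add (f 0)).add
      (((hasDerivAt_pow 2 u).const_mul (K * f 0)).div_const 2)).congr_deriv ?_
    simp only [Nat.cast_ofNat]; ring
  simpa using image_le_of_hasDerivAt_le_boundary hf hB (by simp)
    (fun u hu => hf'le u (Ico_subset_Icc_self hu)) 1 ⟨zero_le_one, le_rfl⟩

end Comparison

theorem le_mul_exp_neg_sum_of_le_mul_exp {u a : ℕ → ℝ}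
    (h : ∀ j, u (j + 1) ≤ u j * Real.exp (-a j)) (t : ℕ) :
    u t ≤ u 0 * Real.exp (-∑ j ∈ Finset.range t, a j) := by
  induction t with
  | zero => simp
  | succ t ih =>
    rw [Finset.sum_range_succ, neg_add, Real.exp_add, ← mul_assoc]
    exact (h t).trans (mul_le_mul_of_nonneg_right ih (Real.exp_pos _).le)

theorem ConvexOn.deriv_deriv_nonneg {ℓ : ℝ → ℝ} (hconv : ConvexOn ℝ univ ℓ)
    (hℓ : Differentiable ℝ ℓ) (z : ℝ) : 0 ≤ deriv (deriv ℓ) z :=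
  (monotoneOn_univ.1 (hconv.monotoneOn_deriv fun x _ => hℓ x)).deriv_nonneg

section EmpiricalRisk

variable {ι E : Type*} [Fintype ι] [NormedAddCommGroup E] [InnerProductSpace ℝ E]

noncomputable def empiricalRisk (ℓ : ℝ → ℝ) (A : ι → E) (w : E) : ℝ :=
  (Fintype.card ι : ℝ)⁻¹ * ∑ i, ℓ ⟪A i, w⟫

/-- The directional derivative `⟪∇R y, δ⟫`. -/
noncomputable def empiricalRiskDeriv (ℓ : ℝ → ℝ) (A : ι → E) (y δ : E) : ℝ :=
  (Fintype.card ι : ℝ)⁻¹ * ∑ i, deriv ℓ ⟪A i, y⟫ * ⟪A i, δ⟫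

/-- The Hessian quadratic form `⟪∇²R y δ, δ⟫`. -/
noncomputable def empiricalRiskDeriv2 (ℓ : ℝ → ℝ) (A : ι → E) (y δ : E) : ℝ :=
  (Fintype.card ι : ℝ)⁻¹ * ∑ i, deriv (deriv ℓ) ⟪A i, y⟫ * ⟪A i, δ⟫ ^ 2

variable {ℓ : ℝ → ℝ} {A : ι → E}

theorem empiricalRisk_nonneg (hℓ : ∀ z, 0 ≤ ℓ z) (w : E) : 0 ≤ empiricalRisk ℓ A w :=
  mul_nonneg (by positivity) (Finset.sum_nonneg fun i _ => hℓ _)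

theorem gradient_empiricalRisk_eq_zero [CompleteSpace E] (hℓ : ∀ z, 0 ≤ ℓ z) {x : E}
    (hx : empiricalRisk ℓ A x = 0) : gradient (empiricalRisk ℓ A) x = 0 := by
  have hmin : IsLocalMin (empiricalRisk ℓ A) x :=
    Eventually.of_forall fun y => hx ▸ empiricalRisk_nonneg hℓ y
  simp [gradient, hmin.fderiv_eq_zero]

theorem differentiable_empiricalRisk (hℓ : Differentiable ℝ ℓ) :
    Differentiable ℝ (empiricalRisk ℓ A) := by
  have hinner (i : ι) : Differentiable ℝ fun w : E => ⟪A i, w⟫ := (innerSL ℝ (A i)).differentiable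
  unfold empiricalRisk; fun_prop

theorem hasDerivAt_comp_inner_line {φ : ℝ → ℝ} (a x δ : E) {s : ℝ}
    (hφ : DifferentiableAt ℝ φ ⟪a, x + s • δ⟫) :
    HasDerivAt (fun s : ℝ => φ ⟪a, x + s • δ⟫) (deriv φ ⟪a, x + s • δ⟫ * ⟪a, δ⟫) s := by
  have hline : HasDerivAt (fun s : ℝ => ⟪a, x + s • δ⟫) ⟪a, δ⟫ s := by
    simpa [inner_add_right, real_inner_smul_right] using
      (hasDerivAt_mul_const ⟪a, δ⟫).const_add ⟪a, x⟫
  exact hφ.hasDerivAt.comp s hline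

theorem hasDerivAt_empiricalRisk_line (hℓ : Differentiable ℝ ℓ) (x δ : E) (s : ℝ) :
    HasDerivAt (fun s : ℝ => empiricalRisk ℓ A (x + s • δ))
      (empiricalRiskDeriv ℓ A (x + s • δ) δ) s :=
  (HasDerivAt.fun_sum fun i _ => hasDerivAt_comp_inner_line (A i) x δ (hℓ _)).const_mul _

theorem hasDerivAt_empiricalRiskDeriv_line (hℓ : Differentiable ℝ (deriv ℓ)) (x δ : E) (s : ℝ) :
    HasDerivAt (fun s : ℝ => empiricalRiskDeriv ℓ A (x + s • δ) δ)
      (empiricalRiskDeriv2 ℓ A (x + s • δ) δ) s := by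
  unfold empiricalRiskDeriv
  refine ((HasDerivAt.fun_sum fun i _ =>
    (hasDerivAt_comp_inner_line (A i) x δ (hℓ _)).mul_const ⟪A i, δ⟫).const_mul _).congr_deriv ?_
  simp only [empiricalRiskDeriv2, sq, mul_assoc]

theorem empiricalRiskDeriv2_nonneg (hℓ : ∀ z, 0 ≤ deriv (deriv ℓ) z) (y δ : E) :
    0 ≤ empiricalRiskDeriv2 ℓ A y δ :=
  mul_nonneg (by positivity) (Finset.sum_nonneg fun i _ => mul_nonneg (hℓ _) (sq_nonneg _))

theorem empiricalRiskDeriv2_le (hA : ∀ i, ‖A i‖ ≤ 1) (hℓ''₀ : ∀ z, 0 ≤ deriv (deriv ℓ) z)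
    (hℓ'' : ∀ z, deriv (deriv ℓ) z ≤ ℓ z) (y δ : E) :
    empiricalRiskDeriv2 ℓ A y δ ≤ ‖δ‖ ^ 2 * empiricalRisk ℓ A y := by
  rw [empiricalRisk, mul_left_comm, Finset.mul_sum, empiricalRiskDeriv2]
  refine mul_le_mul_of_nonneg_left (Finset.sum_le_sum fun i _ => ?_) (by positivity)
  have hinner : ⟪A i, δ⟫ ^ 2 ≤ ‖δ‖ ^ 2 := by
    rw [← sq_abs]
    gcongr
    exact (abs_real_inner_le_norm _ _).trans (mul_le_of_le_one_left (norm_nonneg _) (hA i))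
  calc deriv (deriv ℓ) ⟪A i, y⟫ * ⟪A i, δ⟫ ^ 2 ≤ deriv (deriv ℓ) ⟪A i, y⟫ * ‖δ‖ ^ 2 := by
        gcongr; exact hℓ''₀ _
    _ ≤ ‖δ‖ ^ 2 * ℓ ⟪A i, y⟫ := by rw [mul_comm]; gcongr; exact hℓ'' _

theorem empiricalRisk_add_le [CompleteSpace E] (hA : ∀ i, ‖A i‖ ≤ 1) (hℓ : ContDiff ℝ 2 ℓ)
    (hℓ''₀ : ∀ z, 0 ≤ deriv (deriv ℓ) z) (hℓ'' : ∀ z, deriv (deriv ℓ) z ≤ ℓ z) {x δ : E}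
    (hdesc : ⟪gradient (empiricalRisk ℓ A) x, δ⟫ < 0)
    (hsmall : ‖δ‖ ^ 2 * empiricalRisk ℓ A x ≤ -⟪gradient (empiricalRisk ℓ A) x, δ⟫) :
    empiricalRisk ℓ A (x + δ) ≤ empiricalRisk ℓ A x + ⟪gradient (empiricalRisk ℓ A) x, δ⟫
      + ‖δ‖ ^ 2 * empiricalRisk ℓ A x / 2 := by
  have hd1 := hasDerivAt_empiricalRisk_line (A := A) (hℓ.differentiable two_ne_zero) x δ
  have hd2 := hasDerivAt_empiricalRiskDeriv_line (A := A) hℓ.differentiable_deriv_two x δ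
  have hslope : empiricalRiskDeriv ℓ A (x + (0 : ℝ) • δ) δ =
      ⟪gradient (empiricalRisk ℓ A) x, δ⟫ := by
    have hgrad : HasFDerivAt (empiricalRisk ℓ A)
        (InnerProductSpace.toDual ℝ E (gradient (empiricalRisk ℓ A) x)) (x + (0 : ℝ) • δ) := by
      rw [zero_smul, add_zero]
      exact ((differentiable_empiricalRisk (hℓ.differentiable two_ne_zero)) x).hasGradientAt
    have hline : HasDerivAt (fun s : ℝ => x + s • δ) δ 0 := by
      simpa using ((hasDerivAt_id (0 : ℝ)).smul_const δ).const_add x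
    exact (hd1 0).unique (HasFDerivAt.comp_hasDerivAt (l := empiricalRisk ℓ A)
      (f := fun s : ℝ => x + s • δ) 0 hgrad hline)
  have key := le_add_deriv_add_of_deriv2_le_mul hd1 hd2
    (fun s => empiricalRiskDeriv2_nonneg hℓ''₀ _ δ) (sq_nonneg ‖δ‖)
    (fun s _ => empiricalRiskDeriv2_le hA hℓ''₀ hℓ'' _ δ) (by rwa [hslope])
    (by rwa [hslope, zero_smul, add_zero])
  rw [hslope] at key
  simpa only [zero_smul, one_smul, add_zero] using key

theorem empiricalRisk_sub_smul_gradient_le [CompleteSpace E] (hA : ∀ i, ‖A i‖ ≤ 1)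
    (hℓ : ContDiff ℝ 2 ℓ) (hℓ''₀ : ∀ z, 0 ≤ deriv (deriv ℓ) z)
    (hℓ'' : ∀ z, deriv (deriv ℓ) z ≤ ℓ z) {η : ℝ} (hη : 0 < η) {x : E}
    (hstep : η * empiricalRisk ℓ A x ≤ 1) :
    empiricalRisk ℓ A (x - η • gradient (empiricalRisk ℓ A) x) ≤ empiricalRisk ℓ A x
      - η * (1 - η * empiricalRisk ℓ A x / 2) * ‖gradient (empiricalRisk ℓ A) x‖ ^ 2 := by
  set R := empiricalRisk ℓ A
  set g := gradient R x
  rcases eq_or_ne g 0 with hg | hg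
  · simp [hg]
  have hinner : ⟪g, -(η • g)⟫ = -(η * ‖g‖ ^ 2) := by
    rw [inner_neg_right, real_inner_smul_right, real_inner_self_eq_norm_sq]
  have hnorm : ‖-(η • g)‖ ^ 2 = η ^ 2 * ‖g‖ ^ 2 := by
    rw [norm_neg, norm_smul, Real.norm_of_nonneg hη.le, mul_pow]
  have hg2 : 0 < η * ‖g‖ ^ 2 := by positivity
  have := empiricalRisk_add_le hA hℓ hℓ''₀ hℓ'' (x := x) (δ := -(η • g))
    (by rw [hinner]; linarith)
    (by rw [hinner, hnorm]; nlinarith [mul_le_mul_of_nonneg_right hstep hg2.le])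
  rw [← sub_eq_add_neg, hinner, hnorm] at this
  linarith

theorem empiricalRisk_sub_smul_gradient_le_mul_exp [CompleteSpace E] (hA : ∀ i, ‖A i‖ ≤ 1)
    (hℓ : ContDiff ℝ 2 ℓ) (hℓ''₀ : ∀ z, 0 ≤ deriv (deriv ℓ) z)
    (hℓ'' : ∀ z, deriv (deriv ℓ) z ≤ ℓ z) {η : ℝ} (hη : 0 < η) {x : E}
    (hstep : η * empiricalRisk ℓ A x ≤ 1) :
    empiricalRisk ℓ A (x - η • gradient (empiricalRisk ℓ A) x) ≤ empiricalRisk ℓ A x *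
      Real.exp (-(η * empiricalRisk ℓ A x * (1 - η * empiricalRisk ℓ A x / 2) *
        (‖gradient (empiricalRisk ℓ A) x‖ / empiricalRisk ℓ A x) ^ 2)) := by
  have hdecr := empiricalRisk_sub_smul_gradient_le hA hℓ hℓ''₀ hℓ'' hη hstep
  have hℓ₀ z : 0 ≤ ℓ z := (hℓ''₀ z).trans (hℓ'' z)
  rcases (empiricalRisk_nonneg (A := A) hℓ₀ x).eq_or_lt with hr | hr
  · rw [← hr] at hdecr ⊢
    nlinarith [sq_nonneg ‖gradient (empiricalRisk ℓ A) x‖]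
  set r := empiricalRisk ℓ A x
  set y := η * r * (1 - η * r / 2) * (‖gradient (empiricalRisk ℓ A) x‖ / r) ^ 2
  have hy : r - η * (1 - η * r / 2) * ‖gradient (empiricalRisk ℓ A) x‖ ^ 2 = r * (1 - y) := by
    simp only [y]; field_simp
  calc _ ≤ r * (1 - y) := hy ▸ hdecr
    _ ≤ r * Real.exp (-y) := by gcongr; linarith [Real.add_one_le_exp (-y)]

theorem norm_smul_gradient_empiricalRisk [CompleteSpace E] (hℓ : ∀ z, 0 ≤ ℓ z) {η : ℝ}
    (hη : 0 ≤ η) (x : E) :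
    ‖η • gradient (empiricalRisk ℓ A) x‖ = η * empiricalRisk ℓ A x *
      (‖gradient (empiricalRisk ℓ A) x‖ / empiricalRisk ℓ A x) := by
  rw [norm_smul, Real.norm_of_nonneg hη]
  rcases (empiricalRisk_nonneg (A := A) hℓ x).eq_or_lt with hr | hr
  · simp [gradient_empiricalRisk_eq_zero hℓ hr.symm]
  · field_simp

end EmpiricalRisk

theorem risk_multiplicative_decrease_general {n d : ℕ}
    (A : Fin n → EuclideanSpace ℝ (Fin d)) (hA : ∀ i, ‖A i‖ ≤ 1)
    (ℓ : ℝ → ℝ) (hconv : ConvexOn ℝ Set.univ ℓ) (hC2 : ContDiff ℝ 2 ℓ)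
    (hℓ'' : ∀ z, deriv (deriv ℓ) z ≤ ℓ z)
    (R : EuclideanSpace ℝ (Fin d) → ℝ)
    (hR : ∀ w, R w = (1 / (n : ℝ)) * ∑ i, ℓ ⟪A i, w⟫)
    (η : ℕ → ℝ) (hη : ∀ j, 0 < η j) (w : ℕ → EuclideanSpace ℝ (Fin d))
    (hiter : ∀ j, w (j + 1) = w j - η j • gradient R (w j))
    (hstep : ∀ j, η j * R (w j) ≤ 1) (t : ℕ) :
    R (w t) ≤ R (w 0) *
        Real.exp (-∑ j ∈ Finset.range t,
          (η j * R (w j)) * (1 - (η j * R (w j)) / 2) * (‖gradient R (w j)‖ / R (w j)) ^ 2) ∧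
    ‖w t - w 0‖ ≤ ∑ j ∈ Finset.range t, (η j * R (w j)) * (‖gradient R (w j)‖ / R (w j)) := by
  obtain rfl : R = empiricalRisk ℓ A := funext fun v => by simp [hR, empiricalRisk]
  have hℓ''₀ := hconv.deriv_deriv_nonneg (hC2.differentiable two_ne_zero)
  refine ⟨le_mul_exp_neg_sum_of_le_mul_exp (u := fun j => empiricalRisk ℓ A (w j))
    (fun j => ?_) t, ?_⟩
  · rw [hiter]
    exact empiricalRisk_sub_smul_gradient_le_mul_exp hA hC2 hℓ''₀ hℓ'' (hη j) (hstep j)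
  · calc ‖w t - w 0‖ ≤ ∑ j ∈ Finset.range t, ‖w (j + 1) - w j‖ := by
          simpa only [dist_eq_norm_sub'] using dist_le_range_sum_dist w t
      _ = _ := Finset.sum_congr rfl fun j _ => by
          rw [hiter, sub_sub_cancel_left, norm_neg, norm_smul_gradient_empiricalRisk
            (fun z => (hℓ''₀ z).trans (hℓ'' z)) (hη j).le]

/-- Gradient descent iterates with normalized step sizes `ĥ_j = η_j R(w_j) ≤ 1` satisfy
`R(w_t) ≤ R(w_0) exp(−Σ_{j<t} ĥ_j(1 − ĥ_j/2)γ_j²)` where `γ_j = |∇R(w_j)|/R(w_j)`,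
and `|w_t − w_0| ≤ Σ_{j<t} ĥ_j γ_j`. -/
theorem risk_multiplicative_decrease {n d : ℕ} (hn : 0 < n)
    (A : Fin n → EuclideanSpace ℝ (Fin d)) (hA : ∀ i, ‖A i‖ ≤ 1)
    (ℓ : ℝ → ℝ) (hconv : ConvexOn ℝ Set.univ ℓ) (hC2 : ContDiff ℝ 2 ℓ)
    (hℓ' : ∀ z, deriv ℓ z ≤ ℓ z) (hℓ'' : ∀ z, deriv (deriv ℓ) z ≤ ℓ z)
    (R : EuclideanSpace ℝ (Fin d) → ℝ)
    (hR : ∀ w, R w = (1 / (n : ℝ)) * ∑ i, ℓ ⟪A i, w⟫)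
    (η : ℕ → ℝ) (hη : ∀ j, 0 < η j) (w : ℕ → EuclideanSpace ℝ (Fin d))
    (hiter : ∀ j, w (j + 1) = w j - η j • gradient R (w j))
    (hstep : ∀ j, η j * R (w j) ≤ 1) (t : ℕ) :
    R (w t) ≤ R (w 0) *
        Real.exp (-∑ j ∈ Finset.range t,
          (η j * R (w j)) * (1 - (η j * R (w j)) / 2) * (‖gradient R (w j)‖ / R (w j)) ^ 2) ∧
    ‖w t - w 0‖ ≤ ∑ j ∈ Finset.range t, (η j * R (w j)) * (‖gradient R (w j)‖ / R (w j)) :=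
  risk_multiplicative_decrease_general A hA ℓ hconv hC2 hℓ'' R hR η hη w hiter hstep t
end

section
/- Let A_⊥ ∈ ℝ^{m×d} with m > 0 rows and suppose there exists u with A_⊥ u < 0 coordinatewise. Then the optimization problem min{ max_i (A_⊥ u)_i : |u| = 1 } has a unique optimizer ū, and every optimizer q̄ of min{ |A_⊥^T q| : q ≥ 0, Σ q_i = 1 } satisfies ū = −A_⊥^T q̄ / γ, where γ is the common optimal value of the margin problem (negated). -/
/-!
The margin function `f u = max_i ⟪A i, u⟫` is convex and positively homogeneous, so it attains
its minimum `-γ` on the compact unit sphere, and separability makes `-γ < 0`. If two distinct unit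
vectors attained it, their sum would have norm `< 2` by strict convexity of the ball while
`f (u + v) ≤ -2γ`; normalizing the sum gives a unit vector with value `< -γ`. For a dual optimizer
`q`, averaging gives `⟪∑ i, q i • A i, ū⟫ ≤ f ū = -γ`, while `‖∑ i, q i • A i‖ = γ`, so
Cauchy–Schwarz is an equality and forces `∑ i, q i • A i = -γ • ū`.
-/

open scoped RealInnerProductSpace
open Metric

section MarginFun

variable {ι E : Type*} [Fintype ι] [Nonempty ι] [NormedAddCommGroup E] [InnerProductSpace ℝ E]
  (A : ι → E)

noncomputable def marginFun (u : E) : ℝ :=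
  Finset.univ.sup' Finset.univ_nonempty fun i => ⟪A i, u⟫

variable {A}

theorem inner_le_marginFun (i : ι) (u : E) : ⟪A i, u⟫ ≤ marginFun A u :=
  Finset.le_sup' (fun j => ⟪A j, u⟫) (Finset.mem_univ i)

theorem marginFun_lt_zero_iff {u : E} : marginFun A u < 0 ↔ ∀ i, ⟪A i, u⟫ < 0 := by
  simp [marginFun, Finset.sup'_lt_iff]

@[simp]
theorem marginFun_zero : marginFun A (0 : E) = 0 := by
  simp [marginFun]

theorem marginFun_add_le (u v : E) : marginFun A (u + v) ≤ marginFun A u + marginFun A v :=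
  Finset.sup'_le _ _ fun i _ => by
    rw [inner_add_right]
    exact add_le_add (inner_le_marginFun i u) (inner_le_marginFun i v)

theorem marginFun_smul {c : ℝ} (hc : 0 ≤ c) (u : E) :
    marginFun A (c • u) = c * marginFun A u := by
  simp only [marginFun, real_inner_smul_right]
  exact (Finset.apply_sup'_eq_sup'_comp _ (c * ·) fun x y => mul_max_of_nonneg x y hc).symm

theorem continuous_marginFun : Continuous (marginFun A) :=
  Continuous.finset_sup'_apply _ fun _ _ => continuous_const.inner continuous_id

theorem inner_sum_smul_le_marginFun {q : ι → ℝ} (hq : ∀ i, 0 ≤ q i) (hsum : ∑ i, q i = 1)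
    (u : E) : ⟪∑ i, q i • A i, u⟫ ≤ marginFun A u :=
  calc ⟪∑ i, q i • A i, u⟫ = ∑ i, q i * ⟪A i, u⟫ := by
        simp only [sum_inner, real_inner_smul_left]
    _ ≤ ∑ i, q i * marginFun A u :=
        Finset.sum_le_sum fun i _ => mul_le_mul_of_nonneg_left (inner_le_marginFun i u) (hq i)
    _ = marginFun A u := by rw [← Finset.sum_mul, hsum, one_mul]

theorem exists_isMinOn_marginFun_sphere [ProperSpace E] [Nontrivial E] (A : ι → E) :
    ∃ u ∈ sphere (0 : E) 1, IsMinOn (marginFun A) (sphere 0 1) u :=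
  (isCompact_sphere 0 1).exists_isMinOn (NormedSpace.sphere_nonempty.2 zero_le_one)
    continuous_marginFun.continuousOn

theorem marginFun_le_of_isMinOn_sphere {v : E} (hv : IsMinOn (marginFun A) (sphere 0 1) v)
    {u : E} (hu : u ≠ 0) : marginFun A v ≤ ‖u‖⁻¹ * marginFun A u := by
  rw [← marginFun_smul (inv_nonneg.2 (norm_nonneg u))]
  refine hv ?_
  rw [mem_sphere_zero_iff_norm, norm_smul, norm_inv, norm_norm,
    inv_mul_cancel₀ (norm_ne_zero_iff.2 hu)]

theorem marginFun_lt_zero_of_isMinOn_sphere {v : E} (hv : IsMinOn (marginFun A) (sphere 0 1) v)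
    {u : E} (hu : marginFun A u < 0) : marginFun A v < 0 := by
  have hu0 : u ≠ 0 := by rintro rfl; simp at hu
  calc marginFun A v ≤ ‖u‖⁻¹ * marginFun A u := marginFun_le_of_isMinOn_sphere hv hu0
    _ < 0 := mul_neg_of_pos_of_neg (inv_pos.2 (norm_pos_iff.2 hu0)) hu

theorem eq_of_isMinOn_marginFun_sphere {u v : E} (hu : ‖u‖ = 1) (hv : ‖v‖ = 1)
    (hmin : IsMinOn (marginFun A) (sphere 0 1) v) (hneg : marginFun A v < 0)
    (huv : marginFun A u = marginFun A v) : u = v := by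
  by_contra hne
  have hsum : marginFun A (u + v) ≤ 2 * marginFun A v := by
    linarith [marginFun_add_le (A := A) u v]
  have hsum_ne : u + v ≠ 0 := by
    intro h
    rw [h, marginFun_zero] at hsum
    linarith
  have hray : ¬SameRay ℝ u v := fun h => hne (h.eq_of_norm_eq (hu.trans hv.symm))
  have hlt : ‖u + v‖ < 2 := by
    simpa [hu, hv, one_add_one_eq_two] using norm_add_lt_of_not_sameRay hray
  have hpos : 0 < ‖u + v‖ := norm_pos_iff.2 hsum_ne
  have key := marginFun_le_of_isMinOn_sphere hmin hsum_ne
  rw [le_inv_mul_iff₀ hpos] at key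
  nlinarith

theorem eq_neg_inv_smul_of_norm_sum_smul_eq {v : E} (hv : ‖v‖ = 1) {γ : ℝ} (hγ : 0 < γ)
    (hval : marginFun A v = -γ) {q : ι → ℝ} (hq : ∀ i, 0 ≤ q i) (hsum : ∑ i, q i = 1)
    (hnorm : ‖∑ i, q i • A i‖ = γ) : v = -(γ⁻¹ • ∑ i, q i • A i) := by
  set g := ∑ i, q i • A i
  have hle : ⟪g, v⟫ ≤ -γ := hval ▸ inner_sum_smul_le_marginFun hq hsum v
  have hge : -γ ≤ ⟪g, v⟫ := by
    simpa [hnorm, hv] using neg_le_of_abs_le (abs_real_inner_le_norm g v)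
  have htight : ⟪-g, v⟫ = ‖-g‖ * ‖v‖ := by
    rw [inner_neg_left, norm_neg, hnorm, hv]
    linarith
  have hg : -g = γ • v := by simpa [hv, hnorm] using inner_eq_norm_mul_iff_real.1 htight
  rw [← smul_neg, hg, smul_smul, inv_mul_cancel₀ hγ.ne', one_smul]

end MarginFun

/-- The maximum margin problem `min{max_i ⟨A⊥_i, u⟩ : |u| = 1}` has a unique optimizer `ubar`,
and every dual optimizer `qbar` (minimizer of `|A⊥ᵀ q|` over the simplex) satisfies
`ubar = −A⊥ᵀ qbar / γ`, where `−γ` is the optimal margin value. -/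
theorem max_margin_unique_and_dual_representation {m d : ℕ} (hm : 0 < m)
    (A : Fin m → EuclideanSpace ℝ (Fin d))
    (hsep : ∃ u, ∀ i, ⟪A i, u⟫ < 0) (γ : ℝ)
    (hγ : γ = -sInf {r : ℝ | ∃ u : EuclideanSpace ℝ (Fin d), ‖u‖ = 1 ∧
        r = Finset.univ.sup' ⟨⟨0, hm⟩, Finset.mem_univ _⟩ fun i => ⟪A i, u⟫}) :
    ∃ ubar : EuclideanSpace ℝ (Fin d),
      (‖ubar‖ = 1 ∧ (Finset.univ.sup' ⟨⟨0, hm⟩, Finset.mem_univ _⟩ fun i => ⟪A i, ubar⟫) = -γ) ∧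
      (∀ u : EuclideanSpace ℝ (Fin d), ‖u‖ = 1 →
        (Finset.univ.sup' ⟨⟨0, hm⟩, Finset.mem_univ _⟩ fun i => ⟪A i, u⟫) = -γ → u = ubar) ∧
      (∀ qbar : Fin m → ℝ, (∀ i, 0 ≤ qbar i) → (∑ i, qbar i) = 1 → ‖∑ i, qbar i • A i‖ = γ →
        ubar = -(γ⁻¹ • ∑ i, qbar i • A i)) := by
  have : Nonempty (Fin m) := ⟨⟨0, hm⟩⟩
  change γ = -sInf {r | ∃ u, ‖u‖ = 1 ∧ r = marginFun A u} at hγ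
  change ∃ ubar, (‖ubar‖ = 1 ∧ marginFun A ubar = -γ) ∧
    (∀ u, ‖u‖ = 1 → marginFun A u = -γ → u = ubar) ∧ _
  obtain ⟨u₀, hu₀⟩ := hsep
  have hu₀_neg : marginFun A u₀ < 0 := marginFun_lt_zero_iff.2 hu₀
  have : Nontrivial (EuclideanSpace ℝ (Fin d)) :=
    nontrivial_of_ne u₀ 0 (by rintro rfl; simp at hu₀_neg)
  obtain ⟨ubar, hubar, hmin⟩ := exists_isMinOn_marginFun_sphere A
  rw [mem_sphere_zero_iff_norm] at hubar
  have hleast : IsLeast {r | ∃ u, ‖u‖ = 1 ∧ r = marginFun A u} (marginFun A ubar) :=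
    ⟨⟨ubar, hubar, rfl⟩, by rintro r ⟨u, hu, rfl⟩; exact hmin (mem_sphere_zero_iff_norm.2 hu)⟩
  have hval : marginFun A ubar = -γ := by rw [hγ, hleast.csInf_eq, neg_neg]
  have hneg : marginFun A ubar < 0 := marginFun_lt_zero_of_isMinOn_sphere hmin hu₀_neg
  refine ⟨ubar, ⟨hubar, hval⟩, fun u hu hfu => ?_, fun q hq hsum hnorm => ?_⟩
  · exact eq_of_isMinOn_marginFun_sphere hu hubar hmin hneg (hfu.trans hval.symm)
  · exact eq_neg_inv_smul_of_norm_sum_smul_eq hubar (by linarith) hval hq hsum hnorm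
end

section
/- Let A ∈ ℝ^{n×d}. Partition the rows of A by placing row i into A_c if there exists u_i with A u_i ≤ 0 coordinatewise and (A u_i)_i < 0, and otherwise into A_S. Let S = span of the rows of A_S. Then there exists ũ ∈ S^⊥ with A_c ũ < 0 coordinatewise and A_S ũ = 0; in particular, the projections of the rows of A_c onto S^⊥ form a linearly separable set. -/
/-!
Weak separators of the rows form a convex cone, so adding up one witness per separable row gives a
single `u` that weakly separates every row and strictly separates each separable one. A
non-separable row cannot have negative inner product with `u` (else `u` would witness its
separability), so it is orthogonal to `u`; hence `u` lies in the orthogonal complement of their span.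
-/

open scoped RealInnerProductSpace

/-- Row `i` of the data belongs to the separable part iff some vector weakly separates all rows
while strictly separating row `i`. -/
def IsSepRow {n d : ℕ} (A : Fin n → EuclideanSpace ℝ (Fin d)) (i : Fin n) : Prop :=
  ∃ u : EuclideanSpace ℝ (Fin d), (∀ j, ⟪A j, u⟫ ≤ 0) ∧ ⟪A i, u⟫ < 0

section

variable {ι E : Type*} [NormedAddCommGroup E] [InnerProductSpace ℝ E]

theorem exists_weak_separator_strict_on_finset (A : ι → E) (s : Finset ι)
    (hs : ∀ i ∈ s, ∃ u, (∀ j, ⟪A j, u⟫ ≤ 0) ∧ ⟪A i, u⟫ < 0) :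
    ∃ u, (∀ j, ⟪A j, u⟫ ≤ 0) ∧ ∀ i ∈ s, ⟪A i, u⟫ < 0 := by
  classical
  induction s using Finset.induction_on with
  | empty => exact ⟨0, by simp, by simp⟩
  | insert k s _ ih =>
    obtain ⟨v, hv_weak, hv_strict⟩ := ih fun i hi => hs i (Finset.mem_insert_of_mem hi)
    obtain ⟨w, hw_weak, hw_k⟩ := hs k (Finset.mem_insert_self k s)
    refine ⟨v + w, fun j => ?_, fun i hi => ?_⟩
    · rw [inner_add_right]
      linarith [hv_weak j, hw_weak j]
    · rw [inner_add_right]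
      rcases Finset.mem_insert.mp hi with rfl | hi
      · linarith [hv_weak i]
      · linarith [hv_strict i hi, hw_weak i]

theorem mem_orthogonal_span_of_inner_eq_zero {s : Set E} {u : E} (h : ∀ x ∈ s, ⟪x, u⟫ = 0) :
    u ∈ (Submodule.span ℝ s)ᗮ :=
  have hortho : Submodule.span ℝ {u} ⟂ Submodule.span ℝ s := by
    simpa [real_inner_comm] using h
  hortho.le (Submodule.mem_span_singleton_self u)

end

theorem IsSepRow.inner_eq_zero_of_not {n d : ℕ} {A : Fin n → EuclideanSpace ℝ (Fin d)} {i : Fin n}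
    (hi : ¬ IsSepRow A i) {u : EuclideanSpace ℝ (Fin d)} (hu : ∀ j, ⟪A j, u⟫ ≤ 0) :
    ⟪A i, u⟫ = 0 :=
  (hu i).eq_of_not_lt fun hlt => hi ⟨u, hu, hlt⟩

/-- With `S` the span of the non-separable rows, there is `ũ ∈ S^⊥` strictly separating every
separable row and orthogonal to every non-separable row; in particular the projections of the
separable rows onto `S^⊥` are linearly separable. -/
theorem exists_separator_in_orthogonal_complement {n d : ℕ}
    (A : Fin n → EuclideanSpace ℝ (Fin d)) :
    ∃ utilde ∈ (Submodule.span ℝ {x | ∃ i, ¬ IsSepRow A i ∧ A i = x})ᗮ,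
      (∀ i, IsSepRow A i → ⟪A i, utilde⟫ < 0) ∧
      (∀ i, ¬ IsSepRow A i → ⟪A i, utilde⟫ = 0) := by
  classical
  obtain ⟨u, hu_weak, hu_strict⟩ := exists_weak_separator_strict_on_finset A
    {i | IsSepRow A i} fun i hi => (Finset.mem_filter.mp hi).2
  have hu_zero : ∀ i, ¬ IsSepRow A i → ⟪A i, u⟫ = 0 := fun i hi =>
    IsSepRow.inner_eq_zero_of_not hi hu_weak
  refine ⟨u, ?_, fun i hi => hu_strict i (by simpa using hi), hu_zero⟩
  apply mem_orthogonal_span_of_inner_eq_zero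
  rintro _ ⟨i, hi, rfl⟩
  exact hu_zero i hi
end

section
/- With the partition (A_S, A_c) and S = span(A_S^T) as above, every nonzero v ∈ S has a row a of A_S with ⟨a, v⟩ > 0. -/
open scoped RealInnerProductSpace

open Filter

theorem eq_zero_of_mem_span_of_forall_inner_eq_zero {𝕜 E : Type*} [RCLike 𝕜]
    [NormedAddCommGroup E] [InnerProductSpace 𝕜 E] {s : Set E} {v : E}
    (hv : v ∈ Submodule.span 𝕜 s) (h : ∀ x ∈ s, inner 𝕜 x v = 0) : v = 0 := by
  have hspan : Submodule.span 𝕜 s ≤ (𝕜 ∙ v)ᗮ :=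
    Submodule.span_le.2 fun x hx => Submodule.mem_orthogonal_singleton_iff_inner_left.2 (h x hx)
  exact inner_self_eq_zero.1 (Submodule.mem_orthogonal_singleton_iff_inner_left.1 (hspan hv))

section IsSepRow

variable {n d : ℕ}

theorem exists_inner_nonpos_and_inner_neg_of_isSepRow (A : Fin n → EuclideanSpace ℝ (Fin d)) :
    ∃ U : EuclideanSpace ℝ (Fin d),
      (∀ j, ⟪A j, U⟫ ≤ 0) ∧ ∀ i, IsSepRow A i → ⟪A i, U⟫ < 0 := by
  have hwit : ∀ i, ∃ u : EuclideanSpace ℝ (Fin d),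
      (∀ j, ⟪A j, u⟫ ≤ 0) ∧ (IsSepRow A i → ⟪A i, u⟫ < 0) := by
    intro i
    by_cases hi : IsSepRow A i
    · obtain ⟨u, hle, hlt⟩ := hi
      exact ⟨u, hle, fun _ => hlt⟩
    · exact ⟨0, by simp, fun h => absurd h hi⟩
  choose u hle hlt using hwit
  refine ⟨∑ i, u i, fun j => ?_, fun i hi => ?_⟩
  · rw [inner_sum]
    exact Finset.sum_nonpos fun k _ => hle k j
  · rw [inner_sum]
    exact Finset.sum_neg' (fun k _ => hle k i) ⟨i, Finset.mem_univ i, hlt i hi⟩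

theorem isSepRow_of_inner_neg {A : Fin n → EuclideanSpace ℝ (Fin d)}
    {v : EuclideanSpace ℝ (Fin d)} (hv : ∀ j, ¬ IsSepRow A j → ⟪A j, v⟫ ≤ 0)
    {i : Fin n} (hi : ⟪A i, v⟫ < 0) :
    IsSepRow A i := by
  obtain ⟨U, hUle, hUlt⟩ := exists_inner_nonpos_and_inner_neg_of_isSepRow A
  have hrow : ∀ j, ∀ᶠ t : ℝ in atTop, ⟪A j, v + t • U⟫ ≤ 0 := by
    intro j
    simp only [inner_add_right, real_inner_smul_right]
    by_cases hj : IsSepRow A j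
    · exact (tendsto_atBot_add_const_left _ _
        (tendsto_id.atTop_mul_const_of_neg (hUlt j hj))).eventually_le_atBot 0
    · filter_upwards [eventually_ge_atTop 0] with t ht
      nlinarith [hv j hj, hUle j]
  obtain ⟨t, hall, ht⟩ := ((eventually_all.2 hrow).and (eventually_ge_atTop 0)).exists
  refine ⟨v + t • U, hall, ?_⟩
  rw [inner_add_right, real_inner_smul_right]
  nlinarith [hUle i]

end IsSepRow

/-- Every nonzero `v` in the span `S` of the non-separable rows has positive inner product with
some non-separable row. -/
theorem exists_row_pos_inner_of_mem_span {n d : ℕ}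
    (A : Fin n → EuclideanSpace ℝ (Fin d))
    (v : EuclideanSpace ℝ (Fin d))
    (hv : v ∈ Submodule.span ℝ {x | ∃ i, ¬ IsSepRow A i ∧ A i = x}) (hv0 : v ≠ 0) :
    ∃ i, ¬ IsSepRow A i ∧ 0 < ⟪A i, v⟫ := by
  by_contra! hnonpos
  refine hv0 (eq_zero_of_mem_span_of_forall_inner_eq_zero hv ?_)
  rintro _ ⟨i, hi, rfl⟩
  exact (hnonpos i hi).antisymm (not_lt.1 fun hneg => hi (isSepRow_of_inner_neg hnonpos hneg))
end

section
/- Let A ∈ ℝ^{n×d} with partition (A_S, A_c), S = span(A_S^T), and suppose ℓ ≥ 0 with lim_{z→−∞} ℓ(z) = 0. Let v̄ minimize v ↦ L(A_S v) over S and let ū ∈ S^⊥ be a unit vector with A_c ū < 0 coordinatewise. Then inf_{w ∈ ℝ^d} L(Aw) = L(A_S v̄), and lim_{r→∞} L(A(v̄ + r ū)) = L(A_S v̄). -/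
open scoped RealInnerProductSpace Classical

/-!
Every row of `A_S` lies in `S`, so its margin `⟪A i, w⟫` does not change when `w` is replaced by
its orthogonal projection onto `S`. Hence, as `ℓ ≥ 0`, `L(Aw) ≥ L(A_S w) = L(A_S P_S w) ≥ L(A_S v̄)`
for every `w`. Along `v̄ + r ū` the margins of the rows of `A_S` stay constant since `ū ⊥ S`, while
those of the rows of `A_c` tend to `-∞`, so their losses vanish and the lower bound is reached in
the limit.
-/

open Filter Topology

theorem Submodule.inner_starProjection_of_mem {𝕜 E : Type*} [RCLike 𝕜] [NormedAddCommGroup E]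
    [InnerProductSpace 𝕜 E] (K : Submodule 𝕜 E) [K.HasOrthogonalProjection] {x : E} (hx : x ∈ K)
    (w : E) : inner 𝕜 x (K.starProjection w) = inner 𝕜 x w := by
  rw [← K.inner_starProjection_left_eq_right, K.starProjection_eq_self_iff.mpr hx]

theorem ciInf_eq_of_forall_le_of_tendsto {α β γ : Type*} [ConditionallyCompleteLinearOrder γ]
    [TopologicalSpace γ] [OrderClosedTopology γ] {f : α → γ} {m : γ} (hle : ∀ x, m ≤ f x)
    {g : β → α} {l : Filter β} [l.NeBot] (h : Tendsto (f ∘ g) l (𝓝 m)) : ⨅ x, f x = m := by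
  have : Nonempty α := ⟨g l.nonempty_of_neBot.some⟩
  exact le_antisymm (ge_of_tendsto h (.of_forall fun _ => ciInf_le ⟨m, Set.forall_mem_range.mpr hle⟩ _))
    (le_ciInf hle)

section

variable {ι E : Type*} [Fintype ι] [NormedAddCommGroup E] [InnerProductSpace ℝ E]

theorem sum_ite_inner_starProjection (ℓ : ℝ → ℝ) (p : ι → Prop) (A : ι → E)
    (K : Submodule ℝ E) [K.HasOrthogonalProjection] (hA : ∀ i, ¬ p i → A i ∈ K) (w : E) :
    ∑ i, (if p i then 0 else ℓ ⟪A i, K.starProjection w⟫) = ∑ i, (if p i then 0 else ℓ ⟪A i, w⟫) :=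
  Finset.sum_congr rfl fun i _ => by
    split_ifs with hi
    · rfl
    · rw [K.inner_starProjection_of_mem (hA i hi)]

theorem tendsto_inner_add_smul_atBot {a u : E} (hau : ⟪a, u⟫ < 0) (v : E) :
    Tendsto (fun r : ℝ => ⟪a, v + r • u⟫) atTop atBot := by
  simp only [inner_add_right, real_inner_smul_right]
  exact tendsto_atBot_add_const_left _ _ ((tendsto_mul_const_atBot_of_neg hau).mpr tendsto_id)

theorem tendsto_sum_loss_along_ray {ℓ : ℝ → ℝ} (hlim : Tendsto ℓ atBot (𝓝 0)) {p : ι → Prop}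
    {A : ι → E} {u : E} (hsep : ∀ i, p i → ⟪A i, u⟫ < 0) (horth : ∀ i, ¬ p i → ⟪A i, u⟫ = 0)
    (v : E) :
    Tendsto (fun r : ℝ => ∑ i, ℓ ⟪A i, v + r • u⟫) atTop
      (𝓝 (∑ i, if p i then 0 else ℓ ⟪A i, v⟫)) := by
  refine tendsto_finsetSum _ fun i _ => ?_
  by_cases hi : p i
  · rw [if_pos hi]
    exact hlim.comp (tendsto_inner_add_smul_atBot (hsep i hi) v)
  · simp only [hi, if_false, inner_add_right, real_inner_smul_right, horth i hi, mul_zero,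
      add_zero]
    exact tendsto_const_nhds

end

theorem optimal_ray_attains_infimum_general {n d : ℕ}
    (A : Fin n → EuclideanSpace ℝ (Fin d)) (ℓ : ℝ → ℝ)
    (hnn : ∀ z, 0 ≤ ℓ z) (hlim : Filter.Tendsto ℓ Filter.atBot (nhds 0))
    (F FS : EuclideanSpace ℝ (Fin d) → ℝ)
    (hF : ∀ w, F w = ∑ i, ℓ ⟪A i, w⟫)
    (hFS : ∀ w, FS w = ∑ i, if IsSepRow A i then 0 else ℓ ⟪A i, w⟫)
    (vbar ubar : EuclideanSpace ℝ (Fin d))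
    (hvmin : ∀ v ∈ Submodule.span ℝ {x | ∃ i, ¬ IsSepRow A i ∧ A i = x}, FS vbar ≤ FS v)
    (hubar : ubar ∈ (Submodule.span ℝ {x | ∃ i, ¬ IsSepRow A i ∧ A i = x})ᗮ)
    (hstrict : ∀ i, IsSepRow A i → ⟪A i, ubar⟫ < 0) :
    (⨅ w : EuclideanSpace ℝ (Fin d), F w) = FS vbar ∧
    Filter.Tendsto (fun r : ℝ => F (vbar + r • ubar)) Filter.atTop (nhds (FS vbar)) := by
  set S := Submodule.span ℝ {x | ∃ i, ¬ IsSepRow A i ∧ A i = x}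
  have hAS : ∀ i, ¬ IsSepRow A i → A i ∈ S := fun i hi => Submodule.subset_span ⟨i, hi, rfl⟩
  have hray : Tendsto (fun r : ℝ => F (vbar + r • ubar)) atTop (𝓝 (FS vbar)) := by
    simp only [hF, hFS]
    exact tendsto_sum_loss_along_ray hlim hstrict
      (fun i hi => (S.mem_orthogonal ubar).mp hubar _ (hAS i hi)) vbar
  have hlb : ∀ w, FS vbar ≤ F w := fun w => calc
    FS vbar ≤ FS (S.starProjection w) := hvmin _ (S.starProjection_apply_mem w)
    _ = FS w := by simp only [hFS, sum_ite_inner_starProjection ℓ _ A S hAS]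
    _ ≤ F w := by
      rw [hFS, hF]
      exact Finset.sum_le_sum fun i _ => by split_ifs; exacts [hnn _, le_rfl]
  exact ⟨ciInf_eq_of_forall_le_of_tendsto hlb hray, hray⟩

/-- If `v̄` minimizes the loss over the non-separable part (over `S`) and `ū ∈ S^⊥` is a unit
vector strictly separating the separable rows, then `inf_w L(Aw) = L(A_S v̄)` and the loss along
the ray `v̄ + r ū` tends to this infimum. -/
theorem optimal_ray_attains_infimum {n d : ℕ}
    (A : Fin n → EuclideanSpace ℝ (Fin d)) (ℓ : ℝ → ℝ)
    (hnn : ∀ z, 0 ≤ ℓ z) (hlim : Filter.Tendsto ℓ Filter.atBot (nhds 0))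
    (F FS : EuclideanSpace ℝ (Fin d) → ℝ)
    (hF : ∀ w, F w = ∑ i, ℓ ⟪A i, w⟫)
    (hFS : ∀ w, FS w = ∑ i, if IsSepRow A i then 0 else ℓ ⟪A i, w⟫)
    (vbar ubar : EuclideanSpace ℝ (Fin d))
    (hvbar : vbar ∈ Submodule.span ℝ {x | ∃ i, ¬ IsSepRow A i ∧ A i = x})
    (hvmin : ∀ v ∈ Submodule.span ℝ {x | ∃ i, ¬ IsSepRow A i ∧ A i = x}, FS vbar ≤ FS v)
    (hubar : ubar ∈ (Submodule.span ℝ {x | ∃ i, ¬ IsSepRow A i ∧ A i = x})ᗮ)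
    (hunorm : ‖ubar‖ = 1)
    (hstrict : ∀ i, IsSepRow A i → ⟪A i, ubar⟫ < 0) :
    (⨅ w : EuclideanSpace ℝ (Fin d), F w) = FS vbar ∧
    Filter.Tendsto (fun r : ℝ => F (vbar + r • ubar)) Filter.atTop (nhds (FS vbar)) :=
  optimal_ray_attains_infimum_general A ℓ hnn hlim F FS hF hFS vbar ubar hvmin hubar hstrict
end

section
/- For ℓ ∈ {logistic, exponential} with risk R(w) = (1/n)Σ_i ℓ(⟨A_i,w⟩) (rows |A_i| ≤ 1), let v̄, ū, γ be the optimal offset, maximum margin direction, and margin from the structural decomposition. Then the point z := v̄ + (ln(t)/γ) ū satisfies |z|² = |v̄|² + ln(t)²/γ² and R(z) ≤ inf_w R(w) + exp(|v̄|)/t for every t ≥ 1. -/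
open scoped RealInnerProductSpace

/-!
The direction `ū` leaves every non-separable margin `⟪A i, v̄⟫` unchanged, while pushing every
separable margin down to at most `‖v̄‖ - ln t`. With `ℓ ≤ exp`, each separable row therefore
contributes at most `exp ‖v̄‖ / t`, and the non-separable rows reproduce the infimal risk.
-/

open Finset Real

lemma Real.log_one_add_exp_le_exp (x : ℝ) : log (1 + exp x) ≤ exp x := by
  linarith [log_le_sub_one_of_pos (by positivity : 0 < 1 + exp x)]

section InnerProductSpace

variable {E : Type*} [NormedAddCommGroup E] [InnerProductSpace ℝ E]

lemma norm_add_smul_sq_of_inner_eq_zero {v u : E} (hu : ‖u‖ = 1) (hvu : ⟪v, u⟫ = 0) (c : ℝ) :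
    ‖v + c • u‖ ^ 2 = ‖v‖ ^ 2 + c ^ 2 := by
  rw [norm_add_sq_real, real_inner_smul_right, hvu, norm_smul, hu, Real.norm_eq_abs]
  simp [sq_abs]

lemma inner_add_smul_le_of_margin {a v u : E} {γ c : ℝ} (ha : ‖a‖ ≤ 1) (hmargin : ⟪a, u⟫ ≤ -γ)
    (hc : 0 ≤ c) : ⟪a, v + c • u⟫ ≤ ‖v‖ - c * γ := by
  have hav : ⟪a, v⟫ ≤ ‖v‖ :=
    (real_inner_le_norm a v).trans (mul_le_of_le_one_left (norm_nonneg v) ha)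
  rw [inner_add_right, real_inner_smul_right]
  linarith [mul_le_mul_of_nonneg_left hmargin hc]

end InnerProductSpace

lemma Finset.one_div_card_mul_sum_le_of_le {ι : Type*} [Fintype ι] (C : Finset ι) {f : ι → ℝ} {B : ℝ}
    (hB : 0 ≤ B) (hf : ∀ i ∈ C, f i ≤ B) : (1 / (Fintype.card ι : ℝ)) * ∑ i ∈ C, f i ≤ B := by
  rw [one_div_mul_eq_div]
  refine div_le_of_le_mul₀ (Nat.cast_nonneg _) hB ?_
  calc ∑ i ∈ C, f i ≤ #C * B := by simpa using sum_le_card_nsmul C f B hf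
    _ ≤ Fintype.card ι * B := by gcongr; exact_mod_cast card_le_univ C
    _ = B * Fintype.card ι := mul_comm _ _

theorem comparator_point_low_risk_general {n d : ℕ}
    (A : Fin n → EuclideanSpace ℝ (Fin d)) (hA : ∀ i, ‖A i‖ ≤ 1)
    (ℓ : ℝ → ℝ)
    (hℓ : ℓ = (fun z => Real.log (1 + Real.exp z)) ∨ ℓ = Real.exp)
    (R : EuclideanSpace ℝ (Fin d) → ℝ)
    (hR : ∀ w, R w = (1 / (n : ℝ)) * ∑ i, ℓ ⟪A i, w⟫)
    (C : Finset (Fin n)) (vbar ubar : EuclideanSpace ℝ (Fin d)) (γ : ℝ) (hγ : 0 < γ)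
    (hunorm : ‖ubar‖ = 1) (horth : ⟪vbar, ubar⟫ = 0)
    (hmargin : ∀ i ∈ C, ⟪A i, ubar⟫ ≤ -γ) (hperp : ∀ i ∉ C, ⟪A i, ubar⟫ = 0)
    (hinf : (⨅ w : EuclideanSpace ℝ (Fin d), R w) = (1 / (n : ℝ)) * ∑ i ∈ Cᶜ, ℓ ⟪A i, vbar⟫)
    (t : ℝ) (ht : 1 ≤ t) :
    ‖vbar + (Real.log t / γ) • ubar‖ ^ 2 = ‖vbar‖ ^ 2 + Real.log t ^ 2 / γ ^ 2 ∧
    R (vbar + (Real.log t / γ) • ubar) ≤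
      (⨅ w : EuclideanSpace ℝ (Fin d), R w) + Real.exp ‖vbar‖ / t := by
  set z := vbar + (log t / γ) • ubar
  have hc : 0 ≤ log t / γ := div_nonneg (log_nonneg ht) hγ.le
  have hℓ_le_exp : ∀ x, ℓ x ≤ exp x := by
    rcases hℓ with rfl | rfl
    exacts [log_one_add_exp_le_exp, fun _ => le_rfl]
  have hsep : ∀ i ∈ C, ℓ ⟪A i, z⟫ ≤ exp ‖vbar‖ / t := fun i hi =>
    calc ℓ ⟪A i, z⟫ ≤ exp (‖vbar‖ - log t / γ * γ) :=
          (hℓ_le_exp _).trans (exp_le_exp.2 (inner_add_smul_le_of_margin (hA i) (hmargin i hi) hc))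
      _ = exp ‖vbar‖ / t := by
          rw [div_mul_cancel₀ _ hγ.ne', exp_sub, exp_log (by linarith)]
  have hnonsep : ∀ i ∈ Cᶜ, ℓ ⟪A i, z⟫ = ℓ ⟪A i, vbar⟫ := fun i hi => by
    rw [inner_add_right, real_inner_smul_right, hperp i (mem_compl.1 hi), mul_zero, add_zero]
  refine ⟨by rw [norm_add_smul_sq_of_inner_eq_zero hunorm horth, div_pow], ?_⟩
  calc R z = (1 / (n : ℝ)) * ∑ i ∈ C, ℓ ⟪A i, z⟫ + (1 / (n : ℝ)) * ∑ i ∈ Cᶜ, ℓ ⟪A i, vbar⟫ := by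
        rw [hR, ← sum_add_sum_compl C, mul_add, sum_congr rfl hnonsep]
    _ ≤ exp ‖vbar‖ / t + (1 / (n : ℝ)) * ∑ i ∈ Cᶜ, ℓ ⟪A i, vbar⟫ := by
        gcongr
        simpa using C.one_div_card_mul_sum_le_of_le (by positivity) hsep
    _ = (⨅ w, R w) + exp ‖vbar‖ / t := by rw [hinf, add_comm]

/-- The comparator point `z = v̄ + (ln t / γ) ū` on the optimal ray has squared norm
`|v̄|² + ln(t)²/γ²` and risk within `exp(|v̄|)/t` of the infimal risk. -/
theorem comparator_point_low_risk {n d : ℕ} (hn : 0 < n)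
    (A : Fin n → EuclideanSpace ℝ (Fin d)) (hA : ∀ i, ‖A i‖ ≤ 1)
    (ℓ : ℝ → ℝ)
    (hℓ : ℓ = (fun z => Real.log (1 + Real.exp z)) ∨ ℓ = Real.exp)
    (R : EuclideanSpace ℝ (Fin d) → ℝ)
    (hR : ∀ w, R w = (1 / (n : ℝ)) * ∑ i, ℓ ⟪A i, w⟫)
    (C : Finset (Fin n)) (vbar ubar : EuclideanSpace ℝ (Fin d)) (γ : ℝ) (hγ : 0 < γ)
    (hunorm : ‖ubar‖ = 1) (horth : ⟪vbar, ubar⟫ = 0)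
    (hmargin : ∀ i ∈ C, ⟪A i, ubar⟫ ≤ -γ) (hperp : ∀ i ∉ C, ⟪A i, ubar⟫ = 0)
    (hinf : (⨅ w : EuclideanSpace ℝ (Fin d), R w) = (1 / (n : ℝ)) * ∑ i ∈ Cᶜ, ℓ ⟪A i, vbar⟫)
    (t : ℝ) (ht : 1 ≤ t) :
    ‖vbar + (Real.log t / γ) • ubar‖ ^ 2 = ‖vbar‖ ^ 2 + Real.log t ^ 2 / γ ^ 2 ∧
    R (vbar + (Real.log t / γ) • ubar) ≤
      (⨅ w : EuclideanSpace ℝ (Fin d), R w) + Real.exp ‖vbar‖ / t :=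
  comparator_point_low_risk_general A hA ℓ hℓ R hR C vbar ubar γ hγ hunorm horth hmargin hperp hinf
    t ht
end

section
/- Let ℓ ∈ {logistic, exponential} and A = A_c = A_⊥ be fully separable data with margin γ and dual optimum q̄ (so ū = −A^T q̄/γ). Fix 0 < ε ≤ 1 and t with R(w_t) ≤ ε/n, and let w satisfy R(w) ≤ R(w_t). Then ⟨ū, w⟩/(|ū|·|w|) ≥ −ln R(w_t)/(γ|w|) − g*(q̄)/(γ|w|) − ln 2/(γ|w|), where g(v) = ln((1/n)Σ_i e^{v_i}) and g*(q̄) = ln n + Σ_i q̄_i ln q̄_i ≤ ln n. -/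
/-!
Write `v i = ⟪A i, w⟫`. By the definition of `ū`, `γ ⟪ū, w⟫ = -∑ q̄ᵢ vᵢ`, and the Fenchel–Young
inequality for log-sum-exp (Gibbs' inequality) bounds `∑ q̄ᵢ vᵢ` by `∑ q̄ᵢ ln q̄ᵢ + ln ∑ e^{vᵢ}`.
Since `∑ ℓ(vᵢ) = n R(w) ≤ n R(w_t) ≤ ε ≤ 1`, every loss is at most `1`, a range in which
`e^z ≤ 2 ℓ(z)` also for the logistic loss; hence `∑ e^{vᵢ} ≤ 2 n R(w_t)`. Dividing by `γ ‖w‖`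
gives the bound.
-/

open scoped RealInnerProductSpace

namespace Real

/-- Fenchel–Young for `exp`, whose conjugate is `q ↦ q log q - q`. -/
theorem mul_le_exp_add_mul_log_sub {q : ℝ} (hq : 0 ≤ q) (u : ℝ) :
    q * u ≤ exp u + (q * log q - q) := by
  rcases hq.eq_or_lt with rfl | hq
  · simp [(exp_pos u).le]
  · have h := add_one_le_exp (u - log q)
    rw [exp_sub, exp_log hq] at h
    have h' : q * (u - log q + 1) ≤ exp u := by
      calc q * (u - log q + 1) ≤ q * (exp u / q) := mul_le_mul_of_nonneg_left h hq.le
        _ = exp u := mul_div_cancel₀ _ hq.ne'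
    linarith

theorem sum_mul_le_sum_mul_log_add_log_sum_exp {ι : Type*} [Fintype ι] {q : ι → ℝ}
    (hq0 : ∀ i, 0 ≤ q i) (hq1 : ∑ i, q i = 1) (v : ι → ℝ) :
    ∑ i, q i * v i ≤ ∑ i, q i * log (q i) + log (∑ i, exp (v i)) := by
  set S := ∑ i, exp (v i)
  have hS : 0 < S := Finset.sum_pos (fun i _ => exp_pos _)
    (Finset.nonempty_of_sum_ne_zero (by rw [hq1]; exact one_ne_zero))
  have hsum := Finset.sum_le_sum fun i (_ : i ∈ Finset.univ) =>
    mul_le_exp_add_mul_log_sub (hq0 i) (v i - log S)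
  have hexp : ∑ i, exp (v i - log S) = 1 := by
    simp_rw [exp_sub, exp_log hS, ← Finset.sum_div]
    exact div_self hS.ne'
  simp only [mul_sub, Finset.sum_sub_distrib, Finset.sum_add_distrib, ← Finset.sum_mul, hq1,
    hexp] at hsum
  linarith

theorem exp_le_one_add_two_mul {x : ℝ} (h0 : 0 ≤ x) (h1 : x ≤ 1) : exp x ≤ 1 + 2 * x := by
  have h := convexOn_exp.2 (Set.mem_univ 0) (Set.mem_univ 1) (sub_nonneg.2 h1) h0
    (sub_add_cancel 1 x)
  simp only [smul_eq_mul, mul_zero, mul_one, zero_add, exp_zero] at h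
  nlinarith [exp_one_lt_three]

theorem exp_le_two_mul_log_one_add_exp {z : ℝ} (hz : log (1 + exp z) ≤ 1) :
    exp z ≤ 2 * log (1 + exp z) := by
  have h := exp_le_one_add_two_mul (log_nonneg (by linarith [exp_pos z])) hz
  rw [exp_log (by positivity)] at h
  linarith

end Real

section LogisticOrExp

open Real

variable {ℓ : ℝ → ℝ}

theorem pos_of_logistic_or_exp (hℓ : ℓ = (fun z => log (1 + exp z)) ∨ ℓ = exp) (z : ℝ) :
    0 < ℓ z := by
  rcases hℓ with rfl | rfl
  · exact log_pos (by linarith [exp_pos z])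
  · exact exp_pos z

theorem sum_exp_le_two_mul_sum_of_logistic_or_exp
    (hℓ : ℓ = (fun z => log (1 + exp z)) ∨ ℓ = exp) {ι : Type*} [Fintype ι] {v : ι → ℝ}
    (hv : ∑ i, ℓ (v i) ≤ 1) : ∑ i, exp (v i) ≤ 2 * ∑ i, ℓ (v i) := by
  rw [Finset.mul_sum]
  refine Finset.sum_le_sum fun i hi => ?_
  have hvi : ℓ (v i) ≤ 1 := (Finset.single_le_sum
    (fun j _ => (pos_of_logistic_or_exp hℓ (v j)).le) hi).trans hv
  rcases hℓ with rfl | rfl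
  · exact exp_le_two_mul_log_one_add_exp hvi
  · linarith [exp_pos (v i)]

end LogisticOrExp

theorem div_mul_le_div_of_le_mul {a b γ c : ℝ} (hγ : 0 < γ) (h : a ≤ γ * b) (hc : 0 ≤ c) :
    a / (γ * c) ≤ b / c := by
  rw [div_mul_eq_div_div]
  exact div_le_div_of_nonneg_right ((div_le_iff₀' hγ).2 h) hc

theorem fenchel_young_alignment_general {n d : ℕ} (hn : 0 < n)
    (A : Fin n → EuclideanSpace ℝ (Fin d))
    (ℓ : ℝ → ℝ)
    (hℓ : ℓ = (fun z => Real.log (1 + Real.exp z)) ∨ ℓ = Real.exp)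
    (R : EuclideanSpace ℝ (Fin d) → ℝ)
    (hR : ∀ w, R w = (1 / (n : ℝ)) * ∑ i, ℓ ⟪A i, w⟫)
    (γ : ℝ) (hγ : 0 < γ) (qbar : Fin n → ℝ)
    (hq0 : ∀ i, 0 ≤ qbar i) (hq1 : (∑ i, qbar i) = 1)
    (ubar : EuclideanSpace ℝ (Fin d))
    (hubar : ubar = -(γ⁻¹ • ∑ i, qbar i • A i)) (hunorm : ‖ubar‖ = 1)
    (ε : ℝ) (hε1 : ε ≤ 1)
    (wt : EuclideanSpace ℝ (Fin d)) (hwt : R wt ≤ ε / n)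
    (w : EuclideanSpace ℝ (Fin d)) (hw : R w ≤ R wt) :
    ⟪ubar, w⟫ / (‖ubar‖ * ‖w‖) ≥
      -Real.log (R wt) / (γ * ‖w‖)
        - (Real.log n + ∑ i, qbar i * Real.log (qbar i)) / (γ * ‖w‖)
        - Real.log 2 / (γ * ‖w‖) := by
  have hn' : (0 : ℝ) < n := Nat.cast_pos.mpr hn
  set v : Fin n → ℝ := fun i => ⟪A i, w⟫
  have hloss : ∑ i, ℓ (v i) = n * R w := by simp only [hR, v]; field_simp
  have hloss_pos : 0 < ∑ i, ℓ (v i) := Finset.sum_pos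
    (fun i _ => pos_of_logistic_or_exp hℓ (v i)) ⟨⟨0, hn⟩, Finset.mem_univ _⟩
  have hloss_le : ∑ i, ℓ (v i) ≤ n * R wt := by rw [hloss]; gcongr
  have hloss_le_one : ∑ i, ℓ (v i) ≤ 1 := by
    have : n * R wt ≤ ε := by rwa [le_div_iff₀' hn'] at hwt
    linarith
  have hlse : Real.log (∑ i, Real.exp (v i)) ≤ Real.log 2 + Real.log n + Real.log (R wt) := by
    have hRwt : 0 < R wt := by nlinarith
    calc Real.log (∑ i, Real.exp (v i)) ≤ Real.log (2 * n * R wt) := Real.log_le_log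
          (Finset.sum_pos (fun i _ => Real.exp_pos _) ⟨⟨0, hn⟩, Finset.mem_univ _⟩)
          (by linarith [sum_exp_le_two_mul_sum_of_logistic_or_exp hℓ hloss_le_one])
      _ = Real.log 2 + Real.log n + Real.log (R wt) := by
          rw [Real.log_mul (by positivity) hRwt.ne', Real.log_mul two_ne_zero hn'.ne']
  have hinner : γ * ⟪ubar, w⟫ = -∑ i, qbar i * v i := by
    simp only [hubar, inner_neg_left, real_inner_smul_left, sum_inner, v]
    field_simp
  have hgibbs := Real.sum_mul_le_sum_mul_log_add_log_sum_exp hq0 hq1 v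
  rw [hunorm, one_mul, ge_iff_le, div_sub_div_same, div_sub_div_same]
  exact div_mul_le_div_of_le_mul hγ (by linarith) (norm_nonneg w)

/-- Fenchel–Young alignment bound in the separable case: if `R(w_t) ≤ ε/n` and `R(w) ≤ R(w_t)`,
then `⟨ū, w⟩/(|ū||w|) ≥ −ln R(w_t)/(γ|w|) − g*(q̄)/(γ|w|) − ln 2/(γ|w|)`, where
`g*(q̄) = ln n + Σ_i q̄_i ln q̄_i`. -/
theorem fenchel_young_alignment {n d : ℕ} (hn : 0 < n)
    (A : Fin n → EuclideanSpace ℝ (Fin d)) (hA : ∀ i, ‖A i‖ ≤ 1)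
    (ℓ : ℝ → ℝ)
    (hℓ : ℓ = (fun z => Real.log (1 + Real.exp z)) ∨ ℓ = Real.exp)
    (R : EuclideanSpace ℝ (Fin d) → ℝ)
    (hR : ∀ w, R w = (1 / (n : ℝ)) * ∑ i, ℓ ⟪A i, w⟫)
    (γ : ℝ) (hγ : 0 < γ) (qbar : Fin n → ℝ)
    (hq0 : ∀ i, 0 ≤ qbar i) (hq1 : (∑ i, qbar i) = 1)
    (ubar : EuclideanSpace ℝ (Fin d))
    (hubar : ubar = -(γ⁻¹ • ∑ i, qbar i • A i)) (hunorm : ‖ubar‖ = 1)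
    (hmargin : ∀ i, ⟪A i, ubar⟫ ≤ -γ)
    (ε : ℝ) (hε0 : 0 < ε) (hε1 : ε ≤ 1)
    (wt : EuclideanSpace ℝ (Fin d)) (hwt : R wt ≤ ε / n)
    (w : EuclideanSpace ℝ (Fin d)) (hw : R w ≤ R wt) :
    ⟪ubar, w⟫ / (‖ubar‖ * ‖w‖) ≥
      -Real.log (R wt) / (γ * ‖w‖)
        - (Real.log n + ∑ i, qbar i * Real.log (qbar i)) / (γ * ‖w‖)
        - Real.log 2 / (γ * ‖w‖) :=
  fenchel_young_alignment_general hn A ℓ hℓ R hR γ hγ qbar hq0 hq1 ubar hubar hunorm ε hε1 wt hwt w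
    hw
end

section
/- In the fully separable case with ℓ = exp, rows |A_i| ≤ 1, margin γ > 0, step sizes η_j ≤ 1, and w_0 = 0, the gradient descent iterates satisfy, for all t ≥ 1: max{ |w_t/|w_t| − ū|², |w̄_t/|w̄_t| − ū|² } ≤ (2 + 2 ln n)/(|w_t| γ), where w̄_t = argmin{R(w) : |w| ≤ |w_t|}. -/
/-!
Along gradient descent the potential `γ‖w‖ + log R(w) + R(w)` never increases: one step changes
each exponent `⟪A i, w⟫` by at most `x = η‖∇R(w)‖`, so the chord of `exp` on `[-x, x]` gives
`R(w') ≤ R(w) cosh x - ‖∇R(w)‖ sinh x`, and Taylor bounds on `sinh`, `cosh` show that the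
decrease of `log R + R` pays for the growth `γ x` of `γ‖w‖`. Starting from `w₀ = 0` this gives
`γ‖w_t‖ + log R(w_t) ≤ 1`. Since `ū = -γ⁻¹ ∑ q̄ᵢ Aᵢ` and `log (n R(v)) ≥ maxᵢ ⟪Aᵢ, v⟫`, every `v`
satisfies `-γ⟪v, ū⟫ ≤ log R(v) + log n`; for `w̄_t` use `R(w̄_t) ≤ R(‖w_t‖ ū) ≤ exp(-γ‖w_t‖)`.
Thus both vectors have `γ⟪v, ū⟫ ≥ γ‖w_t‖ - (1 + log n)`, and `‖v/‖v‖ - ū‖² = 2 - 2⟪v, ū⟫/‖v‖`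
turns this into the bound, once `⟪v, ū⟫ ≥ 0`: for `w_t` the margin makes `⟪w_j, ū⟫` increase,
for `w̄_t` reflecting it across `ū^⊥` would otherwise lower `R` without changing the norm.
-/

open scoped RealInnerProductSpace
open Real Finset

lemma abs_exp_sub_taylor_le {x : ℝ} (hx : |x| ≤ 1) :
    |exp x - (1 + x + x ^ 2 / 2 + x ^ 3 / 6)| ≤ 5 * x ^ 4 / 96 := by
  have h := Real.exp_bound hx (n := 4) (by norm_num)
  norm_num [Finset.sum_range_succ, Nat.factorial] at h
  convert h using 1
  rw [← abs_pow, abs_of_nonneg (by positivity)]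
  ring

lemma abs_sinh_sub_le {x : ℝ} (hx : |x| ≤ 1) : |sinh x - (x + x ^ 3 / 6)| ≤ 5 * x ^ 4 / 96 := by
  have h₁ := abs_le.1 (abs_exp_sub_taylor_le hx)
  have h₂ := abs_le.1 (abs_exp_sub_taylor_le (x := -x) (by rwa [abs_neg]))
  rw [sinh_eq, abs_le]
  constructor <;> nlinarith

lemma abs_cosh_sub_le {x : ℝ} (hx : |x| ≤ 1) : |cosh x - (1 + x ^ 2 / 2)| ≤ 5 * x ^ 4 / 96 := by
  have h₁ := abs_le.1 (abs_exp_sub_taylor_le hx)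
  have h₂ := abs_le.1 (abs_exp_sub_taylor_le (x := -x) (by rwa [abs_neg]))
  rw [cosh_eq, abs_le]
  constructor <;> nlinarith

lemma exp_neg_le_cosh_sub_div_mul_sinh {x y : ℝ} (hy : |y| ≤ x) :
    exp (-y) ≤ cosh x - y / x * sinh x := by
  obtain ⟨hxy, hyx⟩ := abs_le.1 hy
  rcases (abs_nonneg y |>.trans hy).eq_or_lt with rfl | hx
  · simp [show y = 0 by linarith]
  have ha : 0 ≤ (x - y) / (2 * x) := div_nonneg (by linarith) (by linarith)
  have hb : 0 ≤ (x + y) / (2 * x) := div_nonneg (by linarith) (by linarith)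
  have hconv := convexOn_exp.2 (Set.mem_univ x) (Set.mem_univ (-x)) ha hb (by field_simp; ring)
  simp only [smul_eq_mul] at hconv
  rw [cosh_eq, sinh_eq]
  have harg : (x - y) / (2 * x) * x + (x + y) / (2 * x) * -x = -y := by
    field_simp
    ring
  rw [harg] at hconv
  refine hconv.trans_eq ?_
  field_simp
  ring

lemma mul_le_sinh_sub_cosh_mul_one_add {x G R : ℝ} (hx : 0 ≤ x) (hxG : x ≤ G) (hGR : G ≤ R)
    (hR : R ≤ 1) : G * x ≤ (G * sinh x - R * (cosh x - 1)) * (1 + R) := by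
  have hx1 : |x| ≤ 1 := by rw [abs_of_nonneg hx]; linarith
  have hs := (abs_le.1 (abs_sinh_sub_le hx1)).1
  have hc := (abs_le.1 (abs_cosh_sub_le hx1)).2
  have hG : 0 ≤ G := hx.trans hxG
  have hR0 : 0 ≤ R := hG.trans hGR
  have hmid : G * x + G * x ^ 3 / 6 - 5 * G * x ^ 4 / 96 - (R * x ^ 2 / 2 + 5 * R * x ^ 4 / 96)
      ≤ G * sinh x - R * (cosh x - 1) := by
    nlinarith [mul_le_mul_of_nonneg_left hs hG, mul_le_mul_of_nonneg_left hc hR0]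
  refine le_trans ?_ (mul_le_mul_of_nonneg_right hmid (by linarith : (0:ℝ) ≤ 1 + R))
  nlinarith [mul_nonneg (mul_nonneg (sub_nonneg.2 hxG) hx) hR0,
    mul_nonneg (mul_nonneg (mul_nonneg hR0 hx) hx) (sub_nonneg.2 hR),
    mul_nonneg (mul_nonneg (by linarith : (0:ℝ) ≤ 1 + R) (sub_nonneg.2 hxG)) (pow_nonneg hx 3),
    mul_nonneg (mul_nonneg (by linarith : (0:ℝ) ≤ 1 + R) (by linarith : (0:ℝ) ≤ 16 - 5 * G - 5 * R))
      (pow_nonneg hx 4)]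

lemma mul_add_log_add_le_log_add {γ x G R R' : ℝ} (hx : 0 ≤ x) (hxG : x ≤ G) (hGR : G ≤ R)
    (hR1 : R ≤ 1) (hR : 0 < R) (hγ : γ * R ≤ G) (hR' : 0 < R')
    (hR'le : R' ≤ R * cosh x - G * sinh x) :
    γ * x + log R' + R' ≤ log R + R := by
  set D := G * sinh x - R * (cosh x - 1)
  have hcore : G * x ≤ D * (1 + R) := mul_le_sinh_sub_cosh_mul_one_add hx hxG hGR hR1
  have hlog : log R' ≤ log R + (R' / R - 1) := by
    have := log_le_sub_one_of_pos (div_pos hR' hR)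
    rwa [log_div hR'.ne' hR.ne', sub_le_iff_le_add'] at this
  have hratio : R' / R - 1 ≤ -(D / R) := by
    rw [div_sub_one hR.ne', ← neg_div, div_le_div_iff_of_pos_right hR]
    linarith
  have hγx : γ * x ≤ D / R + D := by
    rw [div_add' _ _ _ hR.ne', le_div_iff₀ hR]
    nlinarith
  linarith

variable {ι E : Type*} [Fintype ι] [NormedAddCommGroup E] [InnerProductSpace ℝ E]

noncomputable def expRisk (A : ι → E) (w : E) : ℝ :=
  (Fintype.card ι : ℝ)⁻¹ * ∑ i, exp ⟪A i, w⟫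

noncomputable def expRiskGrad (A : ι → E) (w : E) : E :=
  ∑ i, ((Fintype.card ι : ℝ)⁻¹ * exp ⟪A i, w⟫) • A i

noncomputable def expRiskPotential (A : ι → E) (γ : ℝ) (w : E) : ℝ :=
  γ * ‖w‖ + log (expRisk A w) + expRisk A w

section expRisk

variable (A : ι → E)

lemma expRisk_eq_sum (w : E) :
    expRisk A w = ∑ i, (Fintype.card ι : ℝ)⁻¹ * exp ⟪A i, w⟫ :=
  mul_sum _ _ _

lemma expRisk_pos [Nonempty ι] (w : E) : 0 < expRisk A w := by
  rw [expRisk_eq_sum]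
  exact sum_pos (fun i _ => by positivity) univ_nonempty

lemma expRisk_zero [Nonempty ι] : expRisk A 0 = 1 := by
  simp [expRisk]

lemma hasGradientAt_expRisk [CompleteSpace E] (w : E) :
    HasGradientAt (expRisk A) (expRiskGrad A w) w := by
  rw [hasGradientAt_iff_hasFDerivAt]
  have hsum := HasFDerivAt.fun_sum fun i (_ : i ∈ univ) =>
    ((innerSL ℝ (A i)).hasFDerivAt (x := w)).exp
  refine (hsum.const_mul (Fintype.card ι : ℝ)⁻¹).congr_fderiv (ContinuousLinearMap.ext fun v => ?_)
  simp only [coe_innerSL_apply, smul_apply, _root_.sum_apply, smul_eq_mul, mul_sum, expRiskGrad,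
    map_sum, map_smul, InnerProductSpace.toDual_apply_apply, mul_assoc]

lemma gradient_expRisk [CompleteSpace E] : gradient (expRisk A) = expRiskGrad A :=
  gradient_eq (hasGradientAt_expRisk A)

lemma inner_le_log_expRisk_add_log_card (w : E) (i : ι) :
    ⟪A i, w⟫ ≤ log (expRisk A w) + log (Fintype.card ι) := by
  have : Nonempty ι := ⟨i⟩
  have hcard : (Fintype.card ι : ℝ) ≠ 0 := Nat.cast_ne_zero.2 Fintype.card_ne_zero
  rw [add_comm, ← log_mul hcard (expRisk_pos A w).ne',
    le_log_iff_exp_le (mul_pos (by positivity) (expRisk_pos A w)), expRisk,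
    mul_inv_cancel_left₀ hcard]
  exact single_le_sum (f := fun j => exp ⟪A j, w⟫) (fun j _ => (exp_pos _).le) (mem_univ i)

variable {A}

lemma norm_expRiskGrad_le (hA : ∀ i, ‖A i‖ ≤ 1) (w : E) : ‖expRiskGrad A w‖ ≤ expRisk A w := by
  rw [expRisk_eq_sum]
  refine (norm_sum_le _ _).trans (sum_le_sum fun i _ => ?_)
  rw [norm_smul, Real.norm_of_nonneg (by positivity)]
  exact mul_le_of_le_one_right (by positivity) (hA i)

lemma inner_expRiskGrad_le {γ : ℝ} {u : E} (hmargin : ∀ i, ⟪A i, u⟫ ≤ -γ) (w : E) :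
    ⟪expRiskGrad A w, u⟫ ≤ -(γ * expRisk A w) := by
  calc ⟪expRiskGrad A w, u⟫ = ∑ i, (Fintype.card ι : ℝ)⁻¹ * exp ⟪A i, w⟫ * ⟪A i, u⟫ := by
        simp only [expRiskGrad, sum_inner, real_inner_smul_left]
    _ ≤ ∑ i, (Fintype.card ι : ℝ)⁻¹ * exp ⟪A i, w⟫ * -γ :=
        sum_le_sum fun i _ => mul_le_mul_of_nonneg_left (hmargin i) (by positivity)
    _ = -(γ * expRisk A w) := by rw [← sum_mul, ← expRisk_eq_sum]; ring

lemma mul_expRisk_le_norm_expRiskGrad {γ : ℝ} {u : E} (hu : ‖u‖ ≤ 1)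
    (hmargin : ∀ i, ⟪A i, u⟫ ≤ -γ) (w : E) : γ * expRisk A w ≤ ‖expRiskGrad A w‖ := by
  have h := neg_le_of_abs_le (abs_real_inner_le_norm (expRiskGrad A w) u)
  nlinarith [inner_expRiskGrad_le hmargin w, norm_nonneg (expRiskGrad A w)]

lemma expRisk_sub_smul_expRiskGrad_le (hA : ∀ i, ‖A i‖ ≤ 1) (w : E) {η : ℝ} (hη : 0 ≤ η) :
    expRisk A (w - η • expRiskGrad A w) ≤
      expRisk A w * cosh (η * ‖expRiskGrad A w‖) -
        ‖expRiskGrad A w‖ * sinh (η * ‖expRiskGrad A w‖) := by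
  set g := expRiskGrad A w
  set x := η * ‖g‖
  set p : ι → ℝ := fun i => (Fintype.card ι : ℝ)⁻¹ * exp ⟪A i, w⟫
  have hg : ∑ i, p i * ⟪A i, g⟫ = ‖g‖ ^ 2 :=
    calc ∑ i, p i * ⟪A i, g⟫ = ⟪∑ i, p i • A i, g⟫ := by simp only [sum_inner, real_inner_smul_left]
      _ = ‖g‖ ^ 2 := real_inner_self_eq_norm_sq g
  have hchord : ∀ i, exp (-(η * ⟪A i, g⟫)) ≤ cosh x - η * ⟪A i, g⟫ / x * sinh x := fun i =>
    exp_neg_le_cosh_sub_div_mul_sinh <| by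
      rw [abs_mul, abs_of_nonneg hη]
      exact mul_le_mul_of_nonneg_left
        ((abs_real_inner_le_norm _ _).trans (mul_le_of_le_one_left (norm_nonneg g) (hA i))) hη
  calc expRisk A (w - η • g) = ∑ i, p i * exp (-(η * ⟪A i, g⟫)) := by
        rw [expRisk_eq_sum]
        refine sum_congr rfl fun i _ => ?_
        rw [inner_sub_right, real_inner_smul_right, sub_eq_add_neg, exp_add, mul_assoc]
    _ ≤ ∑ i, p i * (cosh x - η * ⟪A i, g⟫ / x * sinh x) :=
        sum_le_sum fun i _ => mul_le_mul_of_nonneg_left (hchord i) (by positivity)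
    _ = expRisk A w * cosh x - η * ‖g‖ ^ 2 / x * sinh x := by
        rw [expRisk_eq_sum, ← hg, sum_mul, mul_sum, sum_div, sum_mul, ← sum_sub_distrib]
        exact sum_congr rfl fun i _ => by ring
    _ = expRisk A w * cosh x - ‖g‖ * sinh x := by
        rcases eq_or_ne x 0 with hx | hx
        · simp [hx]
        · congr 1
          field_simp
          ring

lemma expRiskPotential_sub_smul_expRiskGrad_le [Nonempty ι] (hA : ∀ i, ‖A i‖ ≤ 1) {γ : ℝ}
    (hγ : 0 ≤ γ) {u : E} (hu : ‖u‖ ≤ 1) (hmargin : ∀ i, ⟪A i, u⟫ ≤ -γ) {w : E}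
    (hR : expRisk A w ≤ 1) {η : ℝ} (hη0 : 0 ≤ η) (hη1 : η ≤ 1) :
    expRiskPotential A γ (w - η • expRiskGrad A w) ≤ expRiskPotential A γ w := by
  have hstep := mul_add_log_add_le_log_add (mul_nonneg hη0 (norm_nonneg _))
    (mul_le_of_le_one_left (norm_nonneg _) hη1) (norm_expRiskGrad_le hA w) hR
    (expRisk_pos A w) (mul_expRisk_le_norm_expRiskGrad hu hmargin w) (expRisk_pos A _)
    (expRisk_sub_smul_expRiskGrad_le hA w hη0)
  have hnorm : ‖w - η • expRiskGrad A w‖ ≤ ‖w‖ + η * ‖expRiskGrad A w‖ :=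
    (norm_sub_le _ _).trans_eq (by rw [norm_smul, Real.norm_of_nonneg hη0])
  unfold expRiskPotential
  nlinarith [mul_le_mul_of_nonneg_left hnorm hγ]

lemma neg_mul_inner_le_log_expRisk_add_log_card {q : ι → ℝ} (hq0 : ∀ i, 0 ≤ q i)
    (hq1 : ∑ i, q i = 1) {γ : ℝ} (hγ : γ ≠ 0) {u : E} (hu : u = -(γ⁻¹ • ∑ i, q i • A i))
    (w : E) : -(γ * ⟪w, u⟫) ≤ log (expRisk A w) + log (Fintype.card ι) :=
  calc -(γ * ⟪w, u⟫) = ∑ i, q i * ⟪A i, w⟫ := by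
        rw [hu, inner_neg_right, real_inner_smul_right, inner_sum, mul_neg, neg_neg,
          mul_inv_cancel_left₀ hγ]
        simp only [real_inner_smul_right, real_inner_comm]
    _ ≤ ∑ i, q i * (log (expRisk A w) + log (Fintype.card ι)) :=
        sum_le_sum fun i _ =>
          mul_le_mul_of_nonneg_left (inner_le_log_expRisk_add_log_card A w i) (hq0 i)
    _ = log (expRisk A w) + log (Fintype.card ι) := by rw [← sum_mul, hq1, one_mul]

lemma expRisk_smul_le_exp {γ : ℝ} {u : E} (hmargin : ∀ i, ⟪A i, u⟫ ≤ -γ) {s : ℝ} (hs : 0 ≤ s) :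
    expRisk A (s • u) ≤ exp (-(γ * s)) := by
  rcases isEmpty_or_nonempty ι with hι | hι
  · simpa [expRisk] using (exp_pos _).le
  calc expRisk A (s • u) ≤ (Fintype.card ι : ℝ)⁻¹ * ∑ _i : ι, exp (-(γ * s)) := by
        refine mul_le_mul_of_nonneg_left (sum_le_sum fun i _ => exp_le_exp.2 ?_) (by positivity)
        rw [real_inner_smul_right]
        linarith [mul_le_mul_of_nonneg_left (hmargin i) hs]
    _ = exp (-(γ * s)) := by simp

lemma expRisk_le_exp_of_isMinOn_closedBall {γ : ℝ} {u : E} (hu : ‖u‖ = 1)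
    (hmargin : ∀ i, ⟪A i, u⟫ ≤ -γ) {r : ℝ} (hr : 0 ≤ r) {w : E}
    (hmin : IsMinOn (expRisk A) (Metric.closedBall 0 r) w) :
    expRisk A w ≤ exp (-(γ * r)) :=
  (isMinOn_iff.1 hmin (r • u) (by simp [norm_smul, hu, abs_of_nonneg hr])).trans
    (expRisk_smul_le_exp hmargin hr)

lemma norm_sub_two_mul_inner_smul {u : E} (hu : ‖u‖ = 1) (w : E) :
    ‖w - (2 * ⟪w, u⟫) • u‖ = ‖w‖ := by
  rw [← sq_eq_sq₀ (norm_nonneg _) (norm_nonneg _), norm_sub_sq_real, norm_smul,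
    real_inner_smul_right, Real.norm_eq_abs, hu, mul_pow, sq_abs]
  ring

lemma expRisk_sub_two_mul_inner_smul_lt [Nonempty ι] {u : E} (hmargin : ∀ i, ⟪A i, u⟫ < 0)
    {w : E} (hw : ⟪w, u⟫ < 0) : expRisk A (w - (2 * ⟪w, u⟫) • u) < expRisk A w := by
  refine mul_lt_mul_of_pos_left
    (sum_lt_sum_of_nonempty univ_nonempty fun i _ => exp_lt_exp.2 ?_) (by positivity)
  rw [inner_sub_right, real_inner_smul_right]
  nlinarith [mul_pos_of_neg_of_neg hw (hmargin i)]

lemma inner_nonneg_of_isMinOn_closedBall [Nonempty ι] {u : E} (hu : ‖u‖ = 1)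
    (hmargin : ∀ i, ⟪A i, u⟫ < 0) {r : ℝ} {w : E} (hw : w ∈ Metric.closedBall 0 r)
    (hmin : IsMinOn (expRisk A) (Metric.closedBall 0 r) w) : 0 ≤ ⟪w, u⟫ := by
  by_contra! hneg
  have hmem : w - (2 * ⟪w, u⟫) • u ∈ Metric.closedBall 0 r := by
    rwa [mem_closedBall_zero_iff, norm_sub_two_mul_inner_smul hu, ← mem_closedBall_zero_iff]
  exact (expRisk_sub_two_mul_inner_smul_lt hmargin hneg).not_ge (isMinOn_iff.1 hmin _ hmem)

lemma expRisk_le_one_of_expRiskPotential_le_one {γ : ℝ} (hγ : 0 ≤ γ) {w : E}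
    (h : expRiskPotential A γ w ≤ 1) : expRisk A w ≤ 1 := by
  by_contra! h1
  unfold expRiskPotential at h
  nlinarith [log_pos h1, norm_nonneg w]

lemma expRiskPotential_gd_le_one [Nonempty ι] (hA : ∀ i, ‖A i‖ ≤ 1) {γ : ℝ} (hγ : 0 ≤ γ)
    {u : E} (hu : ‖u‖ ≤ 1) (hmargin : ∀ i, ⟪A i, u⟫ ≤ -γ) {η : ℕ → ℝ}
    (hη : ∀ j, 0 ≤ η j ∧ η j ≤ 1) {w : ℕ → E} (hw0 : w 0 = 0)
    (hgd : ∀ j, w (j + 1) = w j - η j • expRiskGrad A (w j)) (j : ℕ) :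
    expRiskPotential A γ (w j) ≤ 1 := by
  induction j with
  | zero => simp [expRiskPotential, hw0, expRisk_zero]
  | succ j ih =>
    rw [hgd]
    exact (expRiskPotential_sub_smul_expRiskGrad_le hA hγ hu hmargin
      (expRisk_le_one_of_expRiskPotential_le_one hγ ih) (hη j).1 (hη j).2).trans ih

lemma strictMono_inner_gd [Nonempty ι] {γ : ℝ} (hγ : 0 < γ) {u : E}
    (hmargin : ∀ i, ⟪A i, u⟫ ≤ -γ) {η : ℕ → ℝ} (hη : ∀ j, 0 < η j) {w : ℕ → E}
    (hgd : ∀ j, w (j + 1) = w j - η j • expRiskGrad A (w j)) :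
    StrictMono fun j => ⟪w j, u⟫ := by
  refine strictMono_nat_of_lt_succ fun j => ?_
  have hdescent : ⟪expRiskGrad A (w j), u⟫ < 0 :=
    (inner_expRiskGrad_le hmargin (w j)).trans_lt (neg_neg_of_pos (mul_pos hγ (expRisk_pos A _)))
  rw [hgd, inner_sub_left, real_inner_smul_left]
  linarith [mul_neg_of_pos_of_neg (hη j) hdescent]

end expRisk

lemma norm_inv_norm_smul_sub_sq_le {u w : E} (hu : ‖u‖ = 1) (hw : w ≠ 0) {T γ K : ℝ}
    (hγ : 0 < γ) (hwT : ‖w‖ ≤ T) (hwu : 0 ≤ ⟪w, u⟫) (hK : γ * T - K ≤ γ * ⟪w, u⟫) :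
    ‖‖w‖⁻¹ • w - u‖ ^ 2 ≤ 2 * K / (T * γ) := by
  have hw0 : 0 < ‖w‖ := norm_pos_iff.2 hw
  have hT : 0 < T := hw0.trans_le hwT
  calc ‖‖w‖⁻¹ • w - u‖ ^ 2 = 2 - 2 * (⟪w, u⟫ / ‖w‖) := by
        rw [norm_sub_sq_real, norm_smul, real_inner_smul_left, norm_inv, norm_norm,
          inv_mul_cancel₀ hw0.ne', hu]
        ring
    _ ≤ 2 - 2 * (⟪w, u⟫ / T) := by gcongr
    _ = 2 * (γ * T - γ * ⟪w, u⟫) / (T * γ) := by field_simp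
    _ ≤ 2 * K / (T * γ) := by gcongr; linarith

/-- Margin-direction convergence in the separable case for the exponential loss: gradient
descent iterates and the norm-constrained optima satisfy
`max{|w_t/|w_t| − ū|², |w̄_t/|w̄_t| − ū|²} ≤ (2 + 2 ln n)/(|w_t| γ)`. -/
theorem directional_convergence_separable_exp {n d : ℕ} (hn : 0 < n)
    (A : Fin n → EuclideanSpace ℝ (Fin d)) (hA : ∀ i, ‖A i‖ ≤ 1)
    (R : EuclideanSpace ℝ (Fin d) → ℝ)
    (hR : ∀ w, R w = (1 / (n : ℝ)) * ∑ i, Real.exp ⟪A i, w⟫)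
    (γ : ℝ) (hγ : 0 < γ) (qbar : Fin n → ℝ)
    (hq0 : ∀ i, 0 ≤ qbar i) (hq1 : (∑ i, qbar i) = 1)
    (ubar : EuclideanSpace ℝ (Fin d))
    (hubar : ubar = -(γ⁻¹ • ∑ i, qbar i • A i)) (hunorm : ‖ubar‖ = 1)
    (hmargin : ∀ i, ⟪A i, ubar⟫ ≤ -γ)
    (η : ℕ → ℝ) (hη : ∀ j, 0 < η j ∧ η j ≤ 1)
    (w : ℕ → EuclideanSpace ℝ (Fin d)) (hw0 : w 0 = 0)
    (hiter : ∀ j, w (j + 1) = w j - η j • gradient R (w j))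
    (t : ℕ) (ht : 1 ≤ t)
    (wbar : EuclideanSpace ℝ (Fin d)) (hwbar_norm : ‖wbar‖ ≤ ‖w t‖)
    (hwbar_min : ∀ v : EuclideanSpace ℝ (Fin d), ‖v‖ ≤ ‖w t‖ → R wbar ≤ R v) :
    max (‖(‖w t‖)⁻¹ • w t - ubar‖ ^ 2) (‖(‖wbar‖)⁻¹ • wbar - ubar‖ ^ 2) ≤
      (2 + 2 * Real.log n) / (‖w t‖ * γ) := by
  obtain rfl : R = expRisk A := funext fun v => by rw [hR, expRisk, Fintype.card_fin, one_div]
  have : Nonempty (Fin n) := ⟨⟨0, hn⟩⟩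
  have hgd : ∀ j, w (j + 1) = w j - η j • expRiskGrad A (w j) := by
    simpa only [gradient_expRisk] using hiter
  have hwt_u : 0 < ⟪w t, ubar⟫ := by
    simpa [hw0] using strictMono_inner_gd hγ hmargin (fun j => (hη j).1) hgd ht
  have hwt : w t ≠ 0 := fun h => by simp [h] at hwt_u
  have hmin : IsMinOn (expRisk A) (Metric.closedBall 0 ‖w t‖) wbar :=
    isMinOn_iff.2 fun v hv => hwbar_min v (mem_closedBall_zero_iff.1 hv)
  have hRwbar := expRisk_le_exp_of_isMinOn_closedBall hunorm hmargin (norm_nonneg _) hmin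
  have hwbar : wbar ≠ 0 := by
    rintro rfl
    rw [expRisk_zero] at hRwbar
    exact hRwbar.not_gt (exp_lt_one_iff.2 (neg_neg_of_pos (mul_pos hγ (norm_pos_iff.2 hwt))))
  have hwbar_u : 0 ≤ ⟪wbar, ubar⟫ := inner_nonneg_of_isMinOn_closedBall hunorm
    (fun i => (hmargin i).trans_lt (neg_neg_of_pos hγ)) (mem_closedBall_zero_iff.2 hwbar_norm) hmin
  have hdual : ∀ v, -(γ * ⟪v, ubar⟫) ≤ log (expRisk A v) + log n := by
    simpa only [Fintype.card_fin] using
      neg_mul_inner_le_log_expRisk_add_log_card hq0 hq1 hγ.ne' hubar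
  have hΦ := expRiskPotential_gd_le_one hA hγ.le hunorm.le hmargin
    (fun j => ⟨(hη j).1.le, (hη j).2⟩) hw0 hgd t
  rw [show 2 + 2 * log n = 2 * (1 + log n) by ring]
  refine max_le (norm_inv_norm_smul_sub_sq_le hunorm hwt hγ le_rfl hwt_u.le ?_)
    (norm_inv_norm_smul_sub_sq_le hunorm hwbar hγ hwbar_norm hwbar_u ?_)
  · unfold expRiskPotential at hΦ
    linarith [hdual (w t), expRisk_pos A (w t)]
  · linarith [hdual wbar, (log_le_iff_le_exp (expRisk_pos A wbar)).2 hRwbar]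
end

section
/- For ℓ = exp and data matrix A with rows |A_i| ≤ 1 whose separable part A_c has margin γ over S^⊥ (i.e. ⟨A_i, ū⟩ ≤ −γ for rows of A_c and A_S ū = 0 for unit ū ∈ S^⊥), any w ∈ ℝ^d satisfies |∇R(w)| ≥ γ R_c(w), where R_c(w) = (1/n)Σ_{i ∈ c-part} exp(⟨A_i, w⟩). -/
/-! Pairing the gradient with the unit vector `-ubar`: the rows outside `C` are orthogonal to `ubar`
and contribute nothing, while each row in `C` contributes at least `γ` times its (positive)
exponential loss, which is also its derivative weight. -/

open scoped RealInnerProductSpace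

open Finset

section

variable {ι E : Type*} [NormedAddCommGroup E] [InnerProductSpace ℝ E]

theorem hasFDerivAt_sum_exp_inner [Fintype ι] (a : ι → E) (w : E) :
    HasFDerivAt (fun v => ∑ i, Real.exp ⟪a i, v⟫)
      (∑ i, Real.exp ⟪a i, w⟫ • innerSL ℝ (a i)) w :=
  HasFDerivAt.fun_sum fun i _ =>
    (Real.hasDerivAt_exp _).comp_hasFDerivAt w (innerSL ℝ (a i)).hasFDerivAt

theorem mul_sum_le_neg_sum_mul_inner_of_margin [Fintype ι] (a : ι → E) (u : E)
    (C : Finset ι) (γ : ℝ) (c : ι → ℝ) (hc : ∀ i ∈ C, 0 ≤ c i)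
    (hmargin : ∀ i ∈ C, ⟪a i, u⟫ ≤ -γ) (hperp : ∀ i ∉ C, ⟪a i, u⟫ = 0) :
    γ * ∑ i ∈ C, c i ≤ -∑ i, c i * ⟪a i, u⟫ := by
  rw [← sum_subset (subset_univ C) fun i _ hi => by rw [hperp i hi, mul_zero], mul_sum,
    ← sum_neg_distrib]
  refine sum_le_sum fun i hi => ?_
  nlinarith [mul_le_mul_of_nonneg_left (hmargin i hi) (hc i hi)]

end

theorem gradient_norm_lower_bound_exp_general {n d : ℕ}
    (A : Fin n → EuclideanSpace ℝ (Fin d))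
    (R : EuclideanSpace ℝ (Fin d) → ℝ)
    (hR : ∀ w, R w = (1 / (n : ℝ)) * ∑ i, Real.exp ⟪A i, w⟫)
    (C : Finset (Fin n)) (γ : ℝ)
    (ubar : EuclideanSpace ℝ (Fin d)) (hunorm : ‖ubar‖ = 1)
    (hmargin : ∀ i ∈ C, ⟪A i, ubar⟫ ≤ -γ)
    (hperp : ∀ i ∉ C, ⟪A i, ubar⟫ = 0)
    (w : EuclideanSpace ℝ (Fin d)) :
    ‖gradient R w‖ ≥ γ * ((1 / (n : ℝ)) * ∑ i ∈ C, Real.exp ⟪A i, w⟫) := by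
  have hderiv : ⟪gradient R w, ubar⟫ = (1 / (n : ℝ)) * ∑ i, Real.exp ⟪A i, w⟫ * ⟪A i, ubar⟫ := by
    rw [inner_gradient_left, funext hR, ((hasFDerivAt_sum_exp_inner A w).const_mul _).fderiv]
    simp
  have hmargin_sum := mul_sum_le_neg_sum_mul_inner_of_margin A ubar C γ _
    (fun i _ => (Real.exp_pos ⟪A i, w⟫).le) hmargin hperp
  calc γ * ((1 / (n : ℝ)) * ∑ i ∈ C, Real.exp ⟪A i, w⟫)
      ≤ (1 / (n : ℝ)) * -∑ i, Real.exp ⟪A i, w⟫ * ⟪A i, ubar⟫ := by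
        rw [mul_left_comm]; gcongr
    _ = ⟪gradient R w, -ubar⟫ := by rw [inner_neg_right, hderiv, mul_neg]
    _ ≤ ‖gradient R w‖ := by
        simpa [hunorm] using real_inner_le_norm (gradient R w) (-ubar)

/-- Gradient norm lower bound for the exponential loss: pairing with the maximum margin
direction gives `|∇R(w)| ≥ γ R_c(w)`, where `R_c` is the risk over the separable rows. -/
theorem gradient_norm_lower_bound_exp {n d : ℕ} (hn : 0 < n)
    (A : Fin n → EuclideanSpace ℝ (Fin d)) (hA : ∀ i, ‖A i‖ ≤ 1)
    (R : EuclideanSpace ℝ (Fin d) → ℝ)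
    (hR : ∀ w, R w = (1 / (n : ℝ)) * ∑ i, Real.exp ⟪A i, w⟫)
    (C : Finset (Fin n)) (γ : ℝ) (hγ : 0 < γ)
    (ubar : EuclideanSpace ℝ (Fin d)) (hunorm : ‖ubar‖ = 1)
    (hmargin : ∀ i ∈ C, ⟪A i, ubar⟫ ≤ -γ)
    (hperp : ∀ i ∉ C, ⟪A i, ubar⟫ = 0)
    (w : EuclideanSpace ℝ (Fin d)) :
    ‖gradient R w‖ ≥ γ * ((1 / (n : ℝ)) * ∑ i ∈ C, Real.exp ⟪A i, w⟫) :=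
  gradient_norm_lower_bound_exp_general A R hR C γ ubar hunorm hmargin hperp w
end
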